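/- arXiv:2306.02983 — 5 statements merged into one kernel-verified Lean document; each statement's English description precedes it below -/
import Mathlib

section
/- For every interaction i ∈ I, the set reach(i) = { i' ∈ I | i →* i' } of interactions reachable from i under the execution relation is finite. -/
/-- An atomic communication action: the emission (`isEmission = true`) or
reception (`isEmission = false`) of a message on a lifeline. -/
structure MyAction (L M : Type) where
  lifeline : L
  isEmission : Bool
  message : M

/-- Interaction terms: constants are actions and the empty interaction,
`loopS` is unary, and `strict`, `alt` and `cr ℓ` (for every `ℓ ⊆ L`) are binary.
`seq = cr ∅` and `par = cr Set.univ`. -/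
inductive Interaction (L M : Type) : Type where
  | empty : Interaction L M
  | act : MyAction L M → Interaction L M
  | loopS : Interaction L M → Interaction L M
  | strict : Interaction L M → Interaction L M → Interaction L M
  | alt : Interaction L M → Interaction L M → Interaction L M
  | cr : Set L → Interaction L M → Interaction L M → Interaction L M

namespace Interaction

variable {L M : Type}

/-- The evasion predicate `i ↓ ℓ`. -/
inductive Evades : Interaction L M → Set L → Prop where
  | empty (ℓ : Set L) : Evades .empty ℓ
  | act (a : MyAction L M) (ℓ : Set L) : a.lifeline ∉ ℓ → Evades (.act a) ℓ
  | altL {i1 i2 : Interaction L M} {ℓ} : Evades i1 ℓ → Evades (.alt i1 i2) ℓ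
  | altR {i1 i2 : Interaction L M} {ℓ} : Evades i2 ℓ → Evades (.alt i1 i2) ℓ
  | strict {i1 i2 : Interaction L M} {ℓ} : Evades i1 ℓ → Evades i2 ℓ →
      Evades (.strict i1 i2) ℓ
  | cr {i1 i2 : Interaction L M} {ℓ' ℓ} : Evades i1 ℓ → Evades i2 ℓ →
      Evades (.cr ℓ' i1 i2) ℓ
  | loopS (i1 : Interaction L M) (ℓ : Set L) : Evades (.loopS i1) ℓ

/-- The pruning relation `i ⤳ℓ i'`. -/
inductive Prune : Interaction L M → Set L → Interaction L M → Prop where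
  | empty (ℓ : Set L) : Prune .empty ℓ .empty
  | act (a : MyAction L M) (ℓ : Set L) : a.lifeline ∉ ℓ → Prune (.act a) ℓ (.act a)
  | altL {i1 i2 i1' : Interaction L M} {ℓ} : Prune i1 ℓ i1' → ¬ Evades i2 ℓ →
      Prune (.alt i1 i2) ℓ i1'
  | altR {i1 i2 i2' : Interaction L M} {ℓ} : Prune i2 ℓ i2' → ¬ Evades i1 ℓ →
      Prune (.alt i1 i2) ℓ i2'
  | altBoth {i1 i2 i1' i2' : Interaction L M} {ℓ} : Prune i1 ℓ i1' → Prune i2 ℓ i2' →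
      Prune (.alt i1 i2) ℓ (.alt i1' i2')
  | strict {i1 i2 i1' i2' : Interaction L M} {ℓ} : Prune i1 ℓ i1' → Prune i2 ℓ i2' →
      Prune (.strict i1 i2) ℓ (.strict i1' i2')
  | cr {i1 i2 i1' i2' : Interaction L M} {ℓ' ℓ} : Prune i1 ℓ i1' → Prune i2 ℓ i2' →
      Prune (.cr ℓ' i1 i2) ℓ (.cr ℓ' i1' i2')
  | loopS {i1 i1' : Interaction L M} {ℓ} : Prune i1 ℓ i1' →
      Prune (.loopS i1) ℓ (.loopS i1')
  | loopSElim {i1 : Interaction L M} {ℓ} : ¬ Evades i1 ℓ → Prune (.loopS i1) ℓ .empty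

/-- The non-expression predicate `i ̸→a`. -/
inductive NoExpr : Interaction L M → MyAction L M → Prop where
  | empty (a : MyAction L M) : NoExpr .empty a
  | act {a' a : MyAction L M} : a' ≠ a → NoExpr (.act a') a
  | loopS {i1 : Interaction L M} {a} : NoExpr i1 a → NoExpr (.loopS i1) a
  | strictNoEvade {i1 i2 : Interaction L M} {a} : NoExpr i1 a →
      ¬ Evades i1 Set.univ → NoExpr (.strict i1 i2) a
  | strictBoth {i1 i2 : Interaction L M} {a} : NoExpr i1 a →
      NoExpr i2 a → NoExpr (.strict i1 i2) a
  | crNoEvade {i1 i2 : Interaction L M} {ℓ a} : NoExpr i1 a →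
      ¬ Evades i1 ({a.lifeline} \ ℓ) → NoExpr (.cr ℓ i1 i2) a
  | crBoth {i1 i2 : Interaction L M} {ℓ a} : NoExpr i1 a →
      NoExpr i2 a → NoExpr (.cr ℓ i1 i2) a
  | alt {i1 i2 : Interaction L M} {a} : NoExpr i1 a → NoExpr i2 a →
      NoExpr (.alt i1 i2) a

/-- The execution relation `i →a i'`. -/
inductive Exec : Interaction L M → MyAction L M → Interaction L M → Prop where
  | act (a : MyAction L M) : Exec (.act a) a .empty
  | loop {i1 i1' : Interaction L M} {a} : Exec i1 a i1' →
      Exec (.loopS i1) a (.strict i1' (.loopS i1))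
  | strictL {i1 i2 i1' : Interaction L M} {a} : Exec i1 a i1' →
      Exec (.strict i1 i2) a (.strict i1' i2)
  | crL {i1 i2 i1' : Interaction L M} {ℓ a} : Exec i1 a i1' →
      Exec (.cr ℓ i1 i2) a (.cr ℓ i1' i2)
  | strictR {i1 i2 i2' : Interaction L M} {a} : Exec i2 a i2' → Evades i1 Set.univ →
      Exec (.strict i1 i2) a i2'
  | crR {i1 i2 i1' i2' : Interaction L M} {ℓ a} : Exec i2 a i2' →
      Prune i1 ({a.lifeline} \ ℓ) i1' → Exec (.cr ℓ i1 i2) a (.cr ℓ i1' i2')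
  | altChoiceL {i1 i2 i1' : Interaction L M} {a} : Exec i1 a i1' → NoExpr i2 a →
      Exec (.alt i1 i2) a i1'
  | altChoiceR {i1 i2 i2' : Interaction L M} {a} : Exec i2 a i2' → NoExpr i1 a →
      Exec (.alt i1 i2) a i2'
  | altDelay {i1 i2 i1' i2' : Interaction L M} {a} : Exec i1 a i1' → Exec i2 a i2' →
      Exec (.alt i1 i2) a (.alt i1' i2')

/-- The trace semantics `σ(i)`, as a predicate: `Sem i t` iff `t ∈ σ(i)`. -/
inductive Sem : Interaction L M → List (MyAction L M) → Prop where
  | nil {i : Interaction L M} : Evades i Set.univ → Sem i []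
  | cons {i i' : Interaction L M} {a t} : Exec i a i' → Sem i' t → Sem i (a :: t)

/-- One execution step: `i → i'` iff `i →a i'` for some action `a`. -/
def Step (i i' : Interaction L M) : Prop := ∃ a, Exec i a i'

/-- `reach i = { i' | i →* i' }`. -/
def Reach (i : Interaction L M) : Set (Interaction L M) :=
  {i' | Relation.ReflTransGen Step i i'}

/-- One-step rewriting by the simplification system `R`, closed under contexts. -/
inductive Rw : Interaction L M → Interaction L M → Prop where
  | strictEmptyL (x : Interaction L M) : Rw (.strict .empty x) x
  | strictEmptyR (x : Interaction L M) : Rw (.strict x .empty) x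
  | crEmptyL (ℓ : Set L) (x : Interaction L M) : Rw (.cr ℓ .empty x) x
  | crEmptyR (ℓ : Set L) (x : Interaction L M) : Rw (.cr ℓ x .empty) x
  | altEmptyLoop (x : Interaction L M) : Rw (.alt .empty (.loopS x)) (.loopS x)
  | altLoopEmpty (x : Interaction L M) : Rw (.alt (.loopS x) .empty) (.loopS x)
  | altEmptyEmpty : Rw (Interaction.alt (L := L) (M := M) .empty .empty) .empty
  | loopEmpty : Rw (Interaction.loopS (L := L) (M := M) .empty) .empty
  | loopCongr {i i' : Interaction L M} : Rw i i' → Rw (.loopS i) (.loopS i')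
  | strictCongrL {i1 i1' i2 : Interaction L M} : Rw i1 i1' →
      Rw (.strict i1 i2) (.strict i1' i2)
  | strictCongrR {i1 i2 i2' : Interaction L M} : Rw i2 i2' →
      Rw (.strict i1 i2) (.strict i1 i2')
  | altCongrL {i1 i1' i2 : Interaction L M} : Rw i1 i1' → Rw (.alt i1 i2) (.alt i1' i2)
  | altCongrR {i1 i2 i2' : Interaction L M} : Rw i2 i2' → Rw (.alt i1 i2) (.alt i1 i2')
  | crCongrL {i1 i1' i2 : Interaction L M} {ℓ} : Rw i1 i1' →
      Rw (.cr ℓ i1 i2) (.cr ℓ i1' i2)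
  | crCongrR {i1 i2 i2' : Interaction L M} {ℓ} : Rw i2 i2' →
      Rw (.cr ℓ i1 i2) (.cr ℓ i1 i2')

end Interaction

namespace Interaction

variable {L M : Type}

/-- A finite over-approximation of the set of interactions reachable from `i`,
closed under both execution and pruning. -/
def Clo : Interaction L M → Set (Interaction L M)
  | .empty => {.empty}
  | .act a => {.act a, .empty}
  | .strict i1 i2 =>
      (fun p : Interaction L M × Interaction L M => Interaction.strict p.1 p.2) ''
        (Clo i1 ×ˢ Clo i2) ∪ Clo i2
  | .alt i1 i2 =>
      Clo i1 ∪ Clo i2 ∪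
        (fun p : Interaction L M × Interaction L M => Interaction.alt p.1 p.2) ''
          (Clo i1 ×ˢ Clo i2)
  | .cr ℓ i1 i2 =>
      (fun p : Interaction L M × Interaction L M => Interaction.cr ℓ p.1 p.2) ''
        (Clo i1 ×ˢ Clo i2)
  | .loopS i1 =>
      {Interaction.empty} ∪ (Interaction.loopS '' Clo i1) ∪
        (fun p : Interaction L M × Interaction L M => Interaction.strict p.1 p.2) ''
          (Clo i1 ×ˢ ({Interaction.empty} ∪ Interaction.loopS '' Clo i1))

lemma Clo_finite : ∀ i : Interaction L M, (Clo i).Finite := by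
  intro i
  induction i with
  | empty => simp [Clo]
  | act a => simp [Clo]
  | loopS i1 ih =>
      simp only [Clo]
      exact ((Set.finite_singleton _).union (ih.image _)).union
        (((ih.prod ((Set.finite_singleton _).union (ih.image _))).image _))
  | strict i1 i2 ih1 ih2 =>
      simp only [Clo]
      exact ((ih1.prod ih2).image _).union ih2
  | alt i1 i2 ih1 ih2 =>
      simp only [Clo]
      exact (ih1.union ih2).union ((ih1.prod ih2).image _)
  | cr ℓ i1 i2 ih1 ih2 =>
      simp only [Clo]
      exact (ih1.prod ih2).image _

lemma mem_Clo : ∀ i : Interaction L M, i ∈ Clo i := by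
  intro i
  induction i with
  | empty => simp [Clo]
  | act a => simp [Clo]
  | loopS i1 ih =>
      exact Or.inl (Or.inr ⟨i1, ih, rfl⟩)
  | strict i1 i2 ih1 ih2 =>
      exact Or.inl ⟨(i1, i2), ⟨ih1, ih2⟩, rfl⟩
  | alt i1 i2 ih1 ih2 =>
      exact Or.inr ⟨(i1, i2), ⟨ih1, ih2⟩, rfl⟩
  | cr ℓ i1 i2 ih1 ih2 =>
      exact ⟨(i1, i2), ⟨ih1, ih2⟩, rfl⟩

lemma Clo_prune : ∀ i j (ℓ : Set L) j', j ∈ Clo i → Prune j ℓ j' → j' ∈ Clo (L := L) (M := M) i := by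
  intro i
  induction i with
  | empty =>
      intro j ℓ j' hj hp
      simp only [Clo, Set.mem_singleton_iff] at hj
      subst hj; cases hp; simp [Clo]
  | act a =>
      intro j ℓ j' hj hp
      simp only [Clo, Set.mem_insert_iff, Set.mem_singleton_iff] at hj
      rcases hj with rfl | rfl <;> cases hp <;> simp [Clo]
  | loopS i1 ih =>
      intro j ℓ j' hj hp
      rcases hj with (hj | ⟨k, hk, rfl⟩) | ⟨⟨k, m⟩, ⟨hk, hm⟩, rfl⟩
      · simp only [Set.mem_singleton_iff] at hj
        subst hj; cases hp; exact Or.inl (Or.inl rfl)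
      · cases hp with
        | loopS h => exact Or.inl (Or.inr ⟨_, ih _ _ _ hk h, rfl⟩)
        | loopSElim h => exact Or.inl (Or.inl rfl)
      · cases hp with
        | strict h1 h2 =>
            refine Or.inr ⟨(_, _), ⟨ih _ _ _ hk h1, ?_⟩, rfl⟩
            rcases hm with hm | ⟨k2, hk2, rfl⟩
            · simp only [Set.mem_singleton_iff] at hm
              subst hm; cases h2; exact Or.inl rfl
            · cases h2 with
              | loopS h => exact Or.inr ⟨_, ih _ _ _ hk2 h, rfl⟩
              | loopSElim h => exact Or.inl rfl
  | strict i1 i2 ih1 ih2 =>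
      intro j ℓ j' hj hp
      rcases hj with ⟨⟨k1, k2⟩, ⟨h1, h2⟩, rfl⟩ | hj
      · cases hp with
        | strict p1 p2 => exact Or.inl ⟨(_, _), ⟨ih1 _ _ _ h1 p1, ih2 _ _ _ h2 p2⟩, rfl⟩
      · exact Or.inr (ih2 _ _ _ hj hp)
  | alt i1 i2 ih1 ih2 =>
      intro j ℓ j' hj hp
      rcases hj with (hj | hj) | ⟨⟨k1, k2⟩, ⟨h1, h2⟩, rfl⟩
      · exact Or.inl (Or.inl (ih1 _ _ _ hj hp))
      · exact Or.inl (Or.inr (ih2 _ _ _ hj hp))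
      · cases hp with
        | altL p _ => exact Or.inl (Or.inl (ih1 _ _ _ h1 p))
        | altR p _ => exact Or.inl (Or.inr (ih2 _ _ _ h2 p))
        | altBoth p1 p2 =>
            exact Or.inr ⟨(_, _), ⟨ih1 _ _ _ h1 p1, ih2 _ _ _ h2 p2⟩, rfl⟩
  | cr ℓ0 i1 i2 ih1 ih2 =>
      intro j ℓ j' hj hp
      rcases hj with ⟨⟨k1, k2⟩, ⟨h1, h2⟩, rfl⟩
      cases hp with
      | cr p1 p2 => exact ⟨(_, _), ⟨ih1 _ _ _ h1 p1, ih2 _ _ _ h2 p2⟩, rfl⟩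

lemma Clo_exec : ∀ i j (a : MyAction L M) j', j ∈ Clo i → Exec j a j' → j' ∈ Clo (L := L) (M := M) i := by
  intro i
  induction i with
  | empty =>
      intro j a j' hj he
      simp only [Clo, Set.mem_singleton_iff] at hj
      subst hj; cases he
  | act a0 =>
      intro j a j' hj he
      simp only [Clo, Set.mem_insert_iff, Set.mem_singleton_iff] at hj
      rcases hj with rfl | rfl <;> cases he <;> simp [Clo]
  | loopS i1 ih =>
      intro j a j' hj he
      rcases hj with (hj | ⟨k, hk, rfl⟩) | ⟨⟨k, m⟩, ⟨hk, hm⟩, rfl⟩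
      · simp only [Set.mem_singleton_iff] at hj
        subst hj; cases he
      · cases he with
        | loop h =>
            exact Or.inr ⟨(_, _), ⟨ih _ _ _ hk h, Or.inr ⟨_, hk, rfl⟩⟩, rfl⟩
      · cases he with
        | strictL h => exact Or.inr ⟨(_, _), ⟨ih _ _ _ hk h, hm⟩, rfl⟩
        | strictR h _ =>
            rcases hm with hm | ⟨k2, hk2, rfl⟩
            · simp only [Set.mem_singleton_iff] at hm; subst hm; cases h
            · cases h with
              | loop h2 =>
                  exact Or.inr ⟨(_, _), ⟨ih _ _ _ hk2 h2, Or.inr ⟨_, hk2, rfl⟩⟩, rfl⟩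
  | strict i1 i2 ih1 ih2 =>
      intro j a j' hj he
      rcases hj with ⟨⟨k1, k2⟩, ⟨h1, h2⟩, rfl⟩ | hj
      · cases he with
        | strictL h => exact Or.inl ⟨(_, _), ⟨ih1 _ _ _ h1 h, h2⟩, rfl⟩
        | strictR h _ => exact Or.inr (ih2 _ _ _ h2 h)
      · exact Or.inr (ih2 _ _ _ hj he)
  | alt i1 i2 ih1 ih2 =>
      intro j a j' hj he
      rcases hj with (hj | hj) | ⟨⟨k1, k2⟩, ⟨h1, h2⟩, rfl⟩
      · exact Or.inl (Or.inl (ih1 _ _ _ hj he))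
      · exact Or.inl (Or.inr (ih2 _ _ _ hj he))
      · cases he with
        | altChoiceL h _ => exact Or.inl (Or.inl (ih1 _ _ _ h1 h))
        | altChoiceR h _ => exact Or.inl (Or.inr (ih2 _ _ _ h2 h))
        | altDelay ha hb =>
            exact Or.inr ⟨(_, _), ⟨ih1 _ _ _ h1 ha, ih2 _ _ _ h2 hb⟩, rfl⟩
  | cr ℓ0 i1 i2 ih1 ih2 =>
      intro j a j' hj he
      rcases hj with ⟨⟨k1, k2⟩, ⟨h1, h2⟩, rfl⟩
      cases he with
      | crL h => exact ⟨(_, _), ⟨ih1 _ _ _ h1 h, h2⟩, rfl⟩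
      | crR h hp => exact ⟨(_, _), ⟨Clo_prune _ _ _ _ h1 hp, ih2 _ _ _ h2 h⟩, rfl⟩

end Interaction

open Interaction

/-- For every interaction `i`, the set `reach(i)` of interactions
reachable from `i` under the execution relation is finite. -/
theorem reach_finite {L M : Type} [Finite L] [Finite M] (i : Interaction L M) :
    (Reach i).Finite := by
  apply Set.Finite.subset (Clo_finite i)
  intro j hj
  induction hj with
  | refl => exact mem_Clo i
  | tail _ h ih =>
      obtain ⟨a, ha⟩ := h
      exact Clo_exec _ _ _ _ ih ha
end

section
/- For every interaction i ∈ I, the language recognized by the nondeterministic finite automaton nfa(i) equals the trace semantics σ(i), i.e. L(nfa(i)) = σ(i). -/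
open Interaction

/-- The automaton `nfa(i)`: states are the interactions reachable from `i`,
the initial state is `i`, a state is accepting iff it evades all lifelines,
and transitions are given by the execution relation. -/
def nfaOf {L M : Type} (i : Interaction L M) : NFA (MyAction L M) (Reach i) where
  step q a := {q' | Exec q.1 a q'.1}
  start := {⟨i, Relation.ReflTransGen.refl⟩}
  accept := {q | Evades q.1 Set.univ}

theorem evalFrom_mono {α σ : Type*} (N : NFA α σ) (t : List α) {S T : Set σ}
    (h : S ⊆ T) : N.evalFrom S t ⊆ N.evalFrom T t := by
  induction t generalizing S T with
  | nil => exact h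
  | cons a t ih =>
    have : ∀ S T : Set σ, S ⊆ T → N.stepSet S a ⊆ N.stepSet T a := by
      intro S T h x hx
      rw [NFA.mem_stepSet] at hx ⊢
      obtain ⟨u, hu, hx⟩ := hx
      exact ⟨u, h hu, hx⟩
    exact ih (this _ _ h)

def ExecPath {L M : Type} : Interaction L M → List (MyAction L M) → Interaction L M → Prop
  | j, [], j' => j = j'
  | j, a :: t, j' => ∃ k, Exec j a k ∧ ExecPath k t j'

theorem sem_iff_execpath {L M : Type} (j : Interaction L M) (t : List (MyAction L M)) :
    Sem j t ↔ ∃ j', ExecPath j t j' ∧ Evades j' Set.univ := by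
  induction t generalizing j with
  | nil =>
    constructor
    · rintro h; cases h with
      | nil h => exact ⟨j, rfl, h⟩
    · rintro ⟨j', rfl, h⟩; exact Sem.nil h
  | cons a t ih =>
    constructor
    · rintro h; cases h with
      | cons he hs =>
        obtain ⟨j', hp, hev⟩ := (ih _).mp hs
        exact ⟨j', ⟨_, he, hp⟩, hev⟩
    · rintro ⟨j', ⟨k, he, hp⟩, hev⟩
      exact Sem.cons he ((ih _).mpr ⟨j', hp, hev⟩)

theorem reach_closed {L M : Type} {i : Interaction L M} (q : Reach i)
    {a k} (h : Exec q.1 a k) : k ∈ Reach i :=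
  Relation.ReflTransGen.tail q.2 ⟨a, h⟩

theorem eval_iff_execpath {L M : Type} (i : Interaction L M) (t : List (MyAction L M))
    (q q' : Reach i) : q' ∈ (nfaOf i).evalFrom {q} t ↔ ExecPath q.1 t q'.1 := by
  induction t generalizing q with
  | nil =>
    simp only [NFA.evalFrom_nil, Set.mem_singleton_iff, ExecPath]
    constructor
    · rintro rfl; rfl
    · intro h; exact Subtype.ext h.symm
  | cons a t ih =>
    constructor
    · intro h
      -- evalFrom {q} (a :: t) = evalFrom (stepSet {q} a) t
      have : (nfaOf i).evalFrom {q} (a :: t)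
          = (nfaOf i).evalFrom ((nfaOf i).stepSet {q} a) t := rfl
      rw [this] at h
      -- need: if q' ∈ evalFrom S t then ∃ s ∈ S, q' ∈ evalFrom {s} t
      have key : ∀ (t : List (MyAction L M)) (S : Set (Reach i)) (q' : Reach i),
          q' ∈ (nfaOf i).evalFrom S t → ∃ s ∈ S, q' ∈ (nfaOf i).evalFrom {s} t := by
        intro t
        induction t with
        | nil => intro S q' h; exact ⟨q', h, rfl⟩
        | cons b t ihh =>
          intro S q' h
          have : (nfaOf i).evalFrom S (b :: t)
              = (nfaOf i).evalFrom ((nfaOf i).stepSet S b) t := rfl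
          rw [this] at h
          obtain ⟨s, hs, hq'⟩ := ihh _ _ h
          rw [NFA.mem_stepSet] at hs
          obtain ⟨u, hu, hsu⟩ := hs
          refine ⟨u, hu, ?_⟩
          have : (nfaOf i).evalFrom {u} (b :: t)
              = (nfaOf i).evalFrom ((nfaOf i).stepSet {u} b) t := rfl
          rw [this]
          have hsub : {s} ⊆ (nfaOf i).stepSet {u} b := by
            intro x hx; rw [NFA.mem_stepSet]
            exact ⟨u, rfl, hx ▸ hsu⟩
          exact evalFrom_mono (nfaOf i) t hsub hq'
      obtain ⟨s, hs, hq'⟩ := key t _ q' h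
      rw [NFA.mem_stepSet] at hs
      obtain ⟨u, hu, hsu⟩ := hs
      rcases hu with rfl
      exact ⟨s.1, hsu, (ih s).mp hq'⟩
    · rintro ⟨k, he, hp⟩
      have hk : k ∈ Reach i := reach_closed q he
      have hstep : (⟨k, hk⟩ : Reach i) ∈ (nfaOf i).stepSet {q} a := by
        rw [NFA.mem_stepSet]; exact ⟨q, rfl, he⟩
      have : (nfaOf i).evalFrom {q} (a :: t)
          = (nfaOf i).evalFrom ((nfaOf i).stepSet {q} a) t := rfl
      rw [this]
      have := (ih ⟨k, hk⟩).mpr hp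
      exact evalFrom_mono (nfaOf i) t (Set.singleton_subset_iff.mpr hstep) this

/-- the language recognized by `nfa(i)` equals the trace semantics `σ(i)`. -/
theorem nfa_accepts_eq_sem {L M : Type} [Finite L] [Finite M] (i : Interaction L M) :
    (nfaOf i).accepts = {t | Sem i t} := by
  ext t
  simp only [NFA.accepts, NFA.eval, Set.mem_setOf_eq]
  have hstart : (nfaOf i).start = {⟨i, Relation.ReflTransGen.refl⟩} := rfl
  rw [hstart]; simp only [Set.mem_setOf_eq, sem_iff_execpath]
  constructor
  · rintro ⟨q', hacc, hev⟩
    exact ⟨q'.1, (eval_iff_execpath i t _ q').mp hev, hacc⟩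
  · rintro ⟨j', hp, hev⟩
    have hj' : j' ∈ Reach i := by
      clear hev
      have : ∀ (t : List (MyAction L M)) (q : Interaction L M), q ∈ Reach i →
          ∀ j', ExecPath q t j' → j' ∈ Reach i := by
        intro t
        induction t with
        | nil => rintro q hq j' rfl; exact hq
        | cons a t ihh =>
          rintro q hq j' ⟨k, he, hp⟩
          exact ihh k (reach_closed ⟨q, hq⟩ he) j' hp
      exact this t i Relation.ReflTransGen.refl j' hp
    exact ⟨⟨j', hj'⟩, hev, (eval_iff_execpath i t _ ⟨j', hj'⟩).mpr hp⟩
end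

section
/- For every interaction i0 ∈ I, the language recognized by the simplified automaton nfa_s(i0) equals the trace semantics σ(i0), i.e. L(nfa_s(i0)) = σ(i0). -/
open Interaction

/-- The simplified automaton `nfa_s(i0)`, where `ns` maps each interaction to its
(unique) `R`-normal form: states are the normal forms of the interactions reachable
from `i0`, the initial state is `ns i0`, a state is accepting iff it is the normal
form of some reachable interaction evading all lifelines, and there is a transition
`ns i —a→ ns i'` for each pair of reachable interactions `i`, `i'` with `i →a i'`. -/
def nfaS {L M : Type} (ns : Interaction L M → Interaction L M) (i0 : Interaction L M) :
    NFA (MyAction L M) (ns '' Reach i0) where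
  step q a := {q' | ∃ i ∈ Reach i0, ∃ i' ∈ Reach i0, Exec i a i' ∧ ns i = q.1 ∧ ns i' = q'.1}
  start := {⟨ns i0, ⟨i0, Relation.ReflTransGen.refl, rfl⟩⟩}
  accept := {q | ∃ i ∈ Reach i0, Evades i Set.univ ∧ ns i = q.1}

/-!
Every rule of `R` preserves evasion and non-expression, and each execution step of one side
of a rule is matched by one of the other side, the two targets being again related by `→*_R`.
So `→*_R` is a bisimulation preserving acceptance, and interactions with the same normal form
have the same semantics. A path of `nfa_s(i0)` from `i_s` can therefore be replayed as an
execution of `i` itself, and conversely every execution of a reachable interaction is a path of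
the automaton.
-/

namespace Interaction

open Relation

variable {L M : Type}

abbrev RwStar : Interaction L M → Interaction L M → Prop := ReflTransGen Rw

namespace RwStar

variable {i j i1 i2 j1 j2 : Interaction L M}

theorem loopS (h : RwStar i j) : RwStar (.loopS i) (.loopS j) :=
  h.lift Interaction.loopS fun _ _ => Rw.loopCongr

theorem strict (h1 : RwStar i1 j1) (h2 : RwStar i2 j2) :
    RwStar (.strict i1 i2) (.strict j1 j2) :=
  (h1.lift (Interaction.strict · i2) fun _ _ => Rw.strictCongrL).trans
    (h2.lift (Interaction.strict j1 ·) fun _ _ => Rw.strictCongrR)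

theorem alt (h1 : RwStar i1 j1) (h2 : RwStar i2 j2) :
    RwStar (.alt i1 i2) (.alt j1 j2) :=
  (h1.lift (Interaction.alt · i2) fun _ _ => Rw.altCongrL).trans
    (h2.lift (Interaction.alt j1 ·) fun _ _ => Rw.altCongrR)

theorem cr {ℓ : Set L} (h1 : RwStar i1 j1) (h2 : RwStar i2 j2) :
    RwStar (.cr ℓ i1 i2) (.cr ℓ j1 j2) :=
  (h1.lift (Interaction.cr ℓ · i2) fun _ _ => Rw.crCongrL).trans
    (h2.lift (Interaction.cr ℓ j1 ·) fun _ _ => Rw.crCongrR)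

end RwStar

section Evades

variable {i1 i2 : Interaction L M} {ℓ : Set L}

@[simp] theorem evades_empty : Evades (.empty : Interaction L M) ℓ := .empty ℓ

@[simp] theorem evades_loopS : Evades (.loopS i1) ℓ := .loopS i1 ℓ

@[simp] theorem evades_act_iff {a : MyAction L M} : Evades (.act a) ℓ ↔ a.lifeline ∉ ℓ :=
  ⟨fun h => by cases h; assumption, .act a ℓ⟩

@[simp] theorem evades_strict_iff :
    Evades (.strict i1 i2) ℓ ↔ Evades i1 ℓ ∧ Evades i2 ℓ :=
  ⟨fun | .strict h1 h2 => ⟨h1, h2⟩, fun ⟨h1, h2⟩ => .strict h1 h2⟩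

@[simp] theorem evades_cr_iff {ℓ' : Set L} :
    Evades (.cr ℓ' i1 i2) ℓ ↔ Evades i1 ℓ ∧ Evades i2 ℓ :=
  ⟨fun | .cr h1 h2 => ⟨h1, h2⟩, fun ⟨h1, h2⟩ => .cr h1 h2⟩

@[simp] theorem evades_alt_iff : Evades (.alt i1 i2) ℓ ↔ Evades i1 ℓ ∨ Evades i2 ℓ :=
  ⟨fun | .altL h => .inl h | .altR h => .inr h, fun h => h.elim .altL .altR⟩

theorem Rw.evades_iff {i j : Interaction L M} (h : Rw i j) : Evades i ℓ ↔ Evades j ℓ := by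
  induction h <;> simp [*]

theorem RwStar.evades_iff {i j : Interaction L M} (h : RwStar i j) :
    Evades i ℓ ↔ Evades j ℓ := by
  induction h with
  | refl => rfl
  | tail _ hstep ih => exact ih.trans hstep.evades_iff

end Evades

section NoExpr

variable {i1 i2 : Interaction L M} {a : MyAction L M}

@[simp] theorem noExpr_empty : NoExpr (.empty : Interaction L M) a := .empty a

@[simp] theorem noExpr_loopS_iff : NoExpr (.loopS i1) a ↔ NoExpr i1 a :=
  ⟨fun | .loopS h => h, .loopS⟩

@[simp] theorem noExpr_strict_iff :
    NoExpr (.strict i1 i2) a ↔ NoExpr i1 a ∧ (¬ Evades i1 Set.univ ∨ NoExpr i2 a) :=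
  ⟨fun | .strictNoEvade h1 h2 => ⟨h1, .inl h2⟩ | .strictBoth h1 h2 => ⟨h1, .inr h2⟩,
   fun ⟨h1, h2⟩ => h2.elim (.strictNoEvade h1) (.strictBoth h1)⟩

@[simp] theorem noExpr_cr_iff {ℓ : Set L} :
    NoExpr (.cr ℓ i1 i2) a ↔
      NoExpr i1 a ∧ (¬ Evades i1 ({a.lifeline} \ ℓ) ∨ NoExpr i2 a) :=
  ⟨fun | .crNoEvade h1 h2 => ⟨h1, .inl h2⟩ | .crBoth h1 h2 => ⟨h1, .inr h2⟩,
   fun ⟨h1, h2⟩ => h2.elim (.crNoEvade h1) (.crBoth h1)⟩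

@[simp] theorem noExpr_alt_iff : NoExpr (.alt i1 i2) a ↔ NoExpr i1 a ∧ NoExpr i2 a :=
  ⟨fun | .alt h1 h2 => ⟨h1, h2⟩, fun ⟨h1, h2⟩ => .alt h1 h2⟩

theorem Rw.noExpr_iff {i j : Interaction L M} (h : Rw i j) : NoExpr i a ↔ NoExpr j a := by
  induction h with
  | strictCongrL h ih => simp [ih, h.evades_iff]
  | crCongrL h ih => simp [ih, h.evades_iff]
  | _ => simp [*]

end NoExpr

section Prune

variable {i j p q : Interaction L M} {ℓ : Set L}

theorem Prune.evades (h : Prune i ℓ p) : Evades i ℓ := by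
  induction h <;> simp_all

theorem Evades.exists_prune (h : Evades i ℓ) : ∃ p, Prune i ℓ p := by
  induction i with
  | empty => exact ⟨_, .empty ℓ⟩
  | act a => exact ⟨_, .act a ℓ (evades_act_iff.1 h)⟩
  | loopS i1 ih =>
    by_cases h1 : Evades i1 ℓ
    · obtain ⟨p, hp⟩ := ih h1
      exact ⟨_, .loopS hp⟩
    · exact ⟨_, .loopSElim h1⟩
  | strict i1 i2 ih1 ih2 =>
    obtain ⟨p1, hp1⟩ := ih1 (evades_strict_iff.1 h).1
    obtain ⟨p2, hp2⟩ := ih2 (evades_strict_iff.1 h).2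
    exact ⟨_, .strict hp1 hp2⟩
  | cr ℓ' i1 i2 ih1 ih2 =>
    obtain ⟨p1, hp1⟩ := ih1 (evades_cr_iff.1 h).1
    obtain ⟨p2, hp2⟩ := ih2 (evades_cr_iff.1 h).2
    exact ⟨_, .cr hp1 hp2⟩
  | alt i1 i2 ih1 ih2 =>
    by_cases h1 : Evades i1 ℓ <;> by_cases h2 : Evades i2 ℓ
    · obtain ⟨p1, hp1⟩ := ih1 h1
      obtain ⟨p2, hp2⟩ := ih2 h2
      exact ⟨_, .altBoth hp1 hp2⟩
    · obtain ⟨p1, hp1⟩ := ih1 h1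
      exact ⟨_, .altL hp1 h2⟩
    · obtain ⟨p2, hp2⟩ := ih2 h2
      exact ⟨_, .altR hp2 h1⟩
    · exact ((evades_alt_iff.1 h).elim h1 h2).elim

theorem Prune.unique (hp : Prune i ℓ p) (hq : Prune i ℓ q) : p = q := by
  induction hp generalizing q with
  | empty | act => cases hq; rfl
  | altL h1 hne ih =>
    cases hq with
    | altL h _ => exact ih h
    | altR _ hne' => exact (hne' h1.evades).elim
    | altBoth _ h2 => exact (hne h2.evades).elim
  | altR h2 hne ih =>
    cases hq with
    | altL _ hne' => exact (hne' h2.evades).elim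
    | altR h _ => exact ih h
    | altBoth h1 _ => exact (hne h1.evades).elim
  | altBoth h1 h2 ih1 ih2 =>
    cases hq with
    | altL _ hne => exact (hne h2.evades).elim
    | altR _ hne => exact (hne h1.evades).elim
    | altBoth g1 g2 => rw [ih1 g1, ih2 g2]
  | strict _ _ ih1 ih2 => cases hq with | strict g1 g2 => rw [ih1 g1, ih2 g2]
  | cr _ _ ih1 ih2 => cases hq with | cr g1 g2 => rw [ih1 g1, ih2 g2]
  | loopS h1 ih =>
    cases hq with
    | loopS g => rw [ih g]
    | loopSElim hne => exact (hne h1.evades).elim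
  | loopSElim hne =>
    cases hq with
    | loopS g => exact (hne g.evades).elim
    | loopSElim _ => rfl

theorem Rw.exists_prune_right (h : Rw i j) (hp : Prune i ℓ p) :
    ∃ q, Prune j ℓ q ∧ RwStar p q := by
  induction h generalizing p with
  | strictEmptyL =>
    cases hp with | strict h1 h2 => cases h1; exact ⟨_, h2, .single (.strictEmptyL _)⟩
  | strictEmptyR =>
    cases hp with | strict h1 h2 => cases h2; exact ⟨_, h1, .single (.strictEmptyR _)⟩
  | crEmptyL =>
    cases hp with | cr h1 h2 => cases h1; exact ⟨_, h2, .single (.crEmptyL _ _)⟩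
  | crEmptyR =>
    cases hp with | cr h1 h2 => cases h2; exact ⟨_, h1, .single (.crEmptyR _ _)⟩
  | altEmptyLoop =>
    cases hp with
    | altL _ hne | altR _ hne => simp at hne
    | altBoth h1 h2 =>
      cases h1
      cases h2 with
      | loopS g => exact ⟨_, .loopS g, .single (.altEmptyLoop _)⟩
      | loopSElim hne => exact ⟨_, .loopSElim hne, .single .altEmptyEmpty⟩
  | altLoopEmpty =>
    cases hp with
    | altL _ hne | altR _ hne => simp at hne
    | altBoth h1 h2 =>
      cases h2
      cases h1 with
      | loopS g => exact ⟨_, .loopS g, .single (.altLoopEmpty _)⟩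
      | loopSElim hne => exact ⟨_, .loopSElim hne, .single .altEmptyEmpty⟩
  | altEmptyEmpty =>
    cases hp with
    | altL _ hne | altR _ hne => simp at hne
    | altBoth h1 h2 => cases h1; cases h2; exact ⟨_, .empty ℓ, .single .altEmptyEmpty⟩
  | loopEmpty =>
    cases hp with
    | loopS g => cases g; exact ⟨_, .empty ℓ, .single Rw.loopEmpty⟩
    | loopSElim hne => exact (hne evades_empty).elim
  | loopCongr h ih =>
    cases hp with
    | loopS g =>
      obtain ⟨q, hq, hpq⟩ := ih g
      exact ⟨_, .loopS hq, hpq.loopS⟩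
    | loopSElim hne => exact ⟨_, .loopSElim (mt h.evades_iff.2 hne), .refl⟩
  | strictCongrL _ ih =>
    cases hp with
    | strict h1 h2 =>
      obtain ⟨q, hq, hpq⟩ := ih h1
      exact ⟨_, .strict hq h2, hpq.strict .refl⟩
  | strictCongrR _ ih =>
    cases hp with
    | strict h1 h2 =>
      obtain ⟨q, hq, hpq⟩ := ih h2
      exact ⟨_, .strict h1 hq, RwStar.strict .refl hpq⟩
  | crCongrL _ ih =>
    cases hp with
    | cr h1 h2 =>
      obtain ⟨q, hq, hpq⟩ := ih h1
      exact ⟨_, .cr hq h2, hpq.cr .refl⟩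
  | crCongrR _ ih =>
    cases hp with
    | cr h1 h2 =>
      obtain ⟨q, hq, hpq⟩ := ih h2
      exact ⟨_, .cr h1 hq, RwStar.cr .refl hpq⟩
  | altCongrL h ih =>
    cases hp with
    | altL h1 hne =>
      obtain ⟨q, hq, hpq⟩ := ih h1
      exact ⟨_, .altL hq hne, hpq⟩
    | altR h2 hne => exact ⟨_, .altR h2 (mt h.evades_iff.2 hne), .refl⟩
    | altBoth h1 h2 =>
      obtain ⟨q, hq, hpq⟩ := ih h1
      exact ⟨_, .altBoth hq h2, hpq.alt .refl⟩
  | altCongrR h ih =>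
    cases hp with
    | altL h1 hne => exact ⟨_, .altL h1 (mt h.evades_iff.2 hne), .refl⟩
    | altR h2 hne =>
      obtain ⟨q, hq, hpq⟩ := ih h2
      exact ⟨_, .altR hq hne, hpq⟩
    | altBoth h1 h2 =>
      obtain ⟨q, hq, hpq⟩ := ih h2
      exact ⟨_, .altBoth h1 hq, RwStar.alt .refl hpq⟩

/-- Pruning is a partial function defined exactly on the evading interactions, so the forward
transfer of pruning along a rewrite step also yields the backward one. -/
theorem Rw.exists_prune_left (h : Rw i j) (hq : Prune j ℓ q) :
    ∃ p, Prune i ℓ p ∧ RwStar p q := by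
  obtain ⟨p, hp⟩ := (h.evades_iff.2 hq.evades).exists_prune
  obtain ⟨q', hq', hpq'⟩ := h.exists_prune_right hp
  exact ⟨p, hp, hq'.unique hq ▸ hpq'⟩

end Prune

section Exec

variable {i j i' j' : Interaction L M} {a : MyAction L M}

theorem Rw.exists_exec_right (h : Rw i j) (he : Exec i a i') :
    ∃ j', Exec j a j' ∧ RwStar i' j' := by
  induction h generalizing i' with
  | strictEmptyL =>
    cases he with
    | strictL h1 => cases h1
    | strictR h2 _ => exact ⟨_, h2, .refl⟩
  | strictEmptyR =>
    cases he with
    | strictL h1 => exact ⟨_, h1, .single (.strictEmptyR _)⟩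
    | strictR h2 _ => cases h2
  | crEmptyL =>
    cases he with
    | crL h1 => cases h1
    | crR h2 hp => cases hp; exact ⟨_, h2, .single (.crEmptyL _ _)⟩
  | crEmptyR =>
    cases he with
    | crL h1 => exact ⟨_, h1, .single (.crEmptyR _ _)⟩
    | crR h2 _ => cases h2
  | altEmptyLoop =>
    cases he with
    | altChoiceL h1 _ | altDelay h1 _ => cases h1
    | altChoiceR h2 _ => exact ⟨_, h2, .refl⟩
  | altLoopEmpty =>
    cases he with
    | altChoiceL h1 _ => exact ⟨_, h1, .refl⟩
    | altChoiceR h2 _ | altDelay _ h2 => cases h2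
  | altEmptyEmpty =>
    cases he with
    | altChoiceL h1 _ | altDelay h1 _ => cases h1
    | altChoiceR h2 _ => cases h2
  | loopEmpty => cases he with | loop h1 => cases h1
  | loopCongr h ih =>
    cases he with
    | loop h1 =>
      obtain ⟨q, hq, hpq⟩ := ih h1
      exact ⟨_, .loop hq, hpq.strict (.single h.loopCongr)⟩
  | strictCongrL h ih =>
    cases he with
    | strictL h1 =>
      obtain ⟨q, hq, hpq⟩ := ih h1
      exact ⟨_, .strictL hq, hpq.strict .refl⟩
    | strictR h2 hev => exact ⟨_, .strictR h2 (h.evades_iff.1 hev), .refl⟩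
  | strictCongrR h ih =>
    cases he with
    | strictL h1 => exact ⟨_, .strictL h1, RwStar.strict .refl (.single h)⟩
    | strictR h2 hev =>
      obtain ⟨q, hq, hpq⟩ := ih h2
      exact ⟨_, .strictR hq hev, hpq⟩
  | crCongrL h ih =>
    cases he with
    | crL h1 =>
      obtain ⟨q, hq, hpq⟩ := ih h1
      exact ⟨_, .crL hq, hpq.cr .refl⟩
    | crR h2 hp =>
      obtain ⟨p', hp', hpp'⟩ := h.exists_prune_right hp
      exact ⟨_, .crR h2 hp', hpp'.cr .refl⟩
  | crCongrR h ih =>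
    cases he with
    | crL h1 => exact ⟨_, .crL h1, RwStar.cr .refl (.single h)⟩
    | crR h2 hp =>
      obtain ⟨q, hq, hpq⟩ := ih h2
      exact ⟨_, .crR hq hp, RwStar.cr .refl hpq⟩
  | altCongrL h ih =>
    cases he with
    | altChoiceL h1 hne =>
      obtain ⟨q, hq, hpq⟩ := ih h1
      exact ⟨_, .altChoiceL hq hne, hpq⟩
    | altChoiceR h2 hne => exact ⟨_, .altChoiceR h2 (h.noExpr_iff.1 hne), .refl⟩
    | altDelay h1 h2 =>
      obtain ⟨q, hq, hpq⟩ := ih h1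
      exact ⟨_, .altDelay hq h2, hpq.alt .refl⟩
  | altCongrR h ih =>
    cases he with
    | altChoiceL h1 hne => exact ⟨_, .altChoiceL h1 (h.noExpr_iff.1 hne), .refl⟩
    | altChoiceR h2 hne =>
      obtain ⟨q, hq, hpq⟩ := ih h2
      exact ⟨_, .altChoiceR hq hne, hpq⟩
    | altDelay h1 h2 =>
      obtain ⟨q, hq, hpq⟩ := ih h2
      exact ⟨_, .altDelay h1 hq, RwStar.alt .refl hpq⟩

theorem Rw.exists_exec_left (h : Rw i j) (he : Exec j a j') :
    ∃ i', Exec i a i' ∧ RwStar i' j' := by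
  induction h generalizing j' with
  | strictEmptyL => exact ⟨_, .strictR he evades_empty, .refl⟩
  | strictEmptyR => exact ⟨_, .strictL he, .single (.strictEmptyR _)⟩
  | crEmptyL => exact ⟨_, .crR he (.empty _), .single (.crEmptyL _ _)⟩
  | crEmptyR => exact ⟨_, .crL he, .single (.crEmptyR _ _)⟩
  | altEmptyLoop => exact ⟨_, .altChoiceR he noExpr_empty, .refl⟩
  | altLoopEmpty => exact ⟨_, .altChoiceL he noExpr_empty, .refl⟩
  | altEmptyEmpty | loopEmpty => cases he
  | loopCongr h ih =>
    cases he with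
    | loop h1 =>
      obtain ⟨p, hp, hpq⟩ := ih h1
      exact ⟨_, .loop hp, hpq.strict (.single h.loopCongr)⟩
  | strictCongrL h ih =>
    cases he with
    | strictL h1 =>
      obtain ⟨p, hp, hpq⟩ := ih h1
      exact ⟨_, .strictL hp, hpq.strict .refl⟩
    | strictR h2 hev => exact ⟨_, .strictR h2 (h.evades_iff.2 hev), .refl⟩
  | strictCongrR h ih =>
    cases he with
    | strictL h1 => exact ⟨_, .strictL h1, RwStar.strict .refl (.single h)⟩
    | strictR h2 hev =>
      obtain ⟨p, hp, hpq⟩ := ih h2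
      exact ⟨_, .strictR hp hev, hpq⟩
  | crCongrL h ih =>
    cases he with
    | crL h1 =>
      obtain ⟨p, hp, hpq⟩ := ih h1
      exact ⟨_, .crL hp, hpq.cr .refl⟩
    | crR h2 hq =>
      obtain ⟨p', hp', hpq'⟩ := h.exists_prune_left hq
      exact ⟨_, .crR h2 hp', hpq'.cr .refl⟩
  | crCongrR h ih =>
    cases he with
    | crL h1 => exact ⟨_, .crL h1, RwStar.cr .refl (.single h)⟩
    | crR h2 hq =>
      obtain ⟨p, hp, hpq⟩ := ih h2
      exact ⟨_, .crR hp hq, RwStar.cr .refl hpq⟩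
  | altCongrL h ih =>
    cases he with
    | altChoiceL h1 hne =>
      obtain ⟨p, hp, hpq⟩ := ih h1
      exact ⟨_, .altChoiceL hp hne, hpq⟩
    | altChoiceR h2 hne => exact ⟨_, .altChoiceR h2 (h.noExpr_iff.2 hne), .refl⟩
    | altDelay h1 h2 =>
      obtain ⟨p, hp, hpq⟩ := ih h1
      exact ⟨_, .altDelay hp h2, hpq.alt .refl⟩
  | altCongrR h ih =>
    cases he with
    | altChoiceL h1 hne => exact ⟨_, .altChoiceL h1 (h.noExpr_iff.2 hne), .refl⟩
    | altChoiceR h2 hne =>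
      obtain ⟨p, hp, hpq⟩ := ih h2
      exact ⟨_, .altChoiceR hp hne, hpq⟩
    | altDelay h1 h2 =>
      obtain ⟨p, hp, hpq⟩ := ih h2
      exact ⟨_, .altDelay h1 hp, RwStar.alt .refl hpq⟩

theorem RwStar.exists_exec_right (h : RwStar i j) (he : Exec i a i') :
    ∃ j', Exec j a j' ∧ RwStar i' j' := by
  induction h with
  | refl => exact ⟨i', he, .refl⟩
  | tail _ hstep ih =>
    obtain ⟨k', hk', hik'⟩ := ih
    obtain ⟨j', hj', hkj'⟩ := hstep.exists_exec_right hk'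
    exact ⟨j', hj', hik'.trans hkj'⟩

theorem RwStar.exists_exec_left (h : RwStar i j) (he : Exec j a j') :
    ∃ i', Exec i a i' ∧ RwStar i' j' := by
  induction h generalizing j' with
  | refl => exact ⟨j', he, .refl⟩
  | tail _ hstep ih =>
    obtain ⟨k', hk', hkj'⟩ := hstep.exists_exec_left he
    obtain ⟨i', hi', hik'⟩ := ih hk'
    exact ⟨i', hi', hik'.trans hkj'⟩

end Exec

section Sem

variable {i j : Interaction L M} {a : MyAction L M} {t : List (MyAction L M)}

theorem sem_nil_iff : Sem i [] ↔ Evades i Set.univ :=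
  ⟨fun | .nil h => h, .nil⟩

theorem sem_cons_iff : Sem i (a :: t) ↔ ∃ i', Exec i a i' ∧ Sem i' t :=
  ⟨fun | .cons he hs => ⟨_, he, hs⟩, fun ⟨_, he, hs⟩ => .cons he hs⟩

theorem RwStar.sem_iff (h : RwStar i j) : Sem i t ↔ Sem j t := by
  induction t generalizing i j with
  | nil => rw [sem_nil_iff, sem_nil_iff, h.evades_iff]
  | cons a t ih =>
    rw [sem_cons_iff, sem_cons_iff]
    constructor
    · rintro ⟨i', he, hs⟩
      obtain ⟨j', hj', hij'⟩ := h.exists_exec_right he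
      exact ⟨j', hj', (ih hij').1 hs⟩
    · rintro ⟨j', he, hs⟩
      obtain ⟨i', hi', hij'⟩ := h.exists_exec_left he
      exact ⟨i', hi', (ih hij').2 hs⟩

theorem sem_iff_of_ns_eq {ns : Interaction L M → Interaction L M} (hns : ∀ i, RwStar i (ns i))
    (h : ns i = ns j) : Sem i t ↔ Sem j t :=
  (hns i).sem_iff.trans (h ▸ (hns j).sem_iff.symm)

end Sem

end Interaction

theorem NFA.mem_acceptsFrom_iff_exists {α σ : Type*} {A : NFA α σ} {S : Set σ} {x : List α} :
    x ∈ A.acceptsFrom S ↔ ∃ s ∈ S, x ∈ A.acceptsFrom {s} := by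
  simp only [NFA.mem_acceptsFrom, NFA.mem_evalFrom_iff_exists (S := S)]
  grind

theorem mem_nfaS_acceptsFrom_iff_sem {L M : Type} {ns : Interaction L M → Interaction L M}
    (hns : ∀ i, RwStar i (ns i)) {i0 i : Interaction L M} (hi : i ∈ Reach i0)
    (t : List (MyAction L M)) :
    t ∈ (nfaS ns i0).acceptsFrom {⟨ns i, i, hi, rfl⟩} ↔ Sem i t := by
  induction t generalizing i with
  | nil =>
    rw [NFA.nil_mem_acceptsFrom, sem_nil_iff]
    constructor
    · rintro ⟨_, rfl, k, -, hk, hki⟩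
      exact sem_nil_iff.1 ((sem_iff_of_ns_eq hns hki).1 (.nil hk))
    · exact fun hev => ⟨_, rfl, i, hi, hev, rfl⟩
  | cons a t ih =>
    rw [NFA.cons_mem_acceptsFrom, NFA.stepSet_singleton, NFA.mem_acceptsFrom_iff_exists]
    constructor
    · rintro ⟨q', ⟨k, -, k', hk', hex, hki, hk'q'⟩, ht⟩
      obtain rfl : q' = ⟨ns k', k', hk', rfl⟩ := Subtype.ext hk'q'.symm
      exact (sem_iff_of_ns_eq hns hki).1 (.cons hex ((ih hk').1 ht))
    · intro hs
      obtain ⟨i', hex, hs'⟩ := sem_cons_iff.1 hs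
      have hi' : i' ∈ Reach i0 := hi.tail ⟨a, hex⟩
      exact ⟨_, ⟨i, hi, i', hi', hex, rfl, rfl⟩, (ih hi').2 hs'⟩

theorem nfaS_accepts_eq_sem_general {L M : Type}
    (ns : Interaction L M → Interaction L M)
    (hns : ∀ i, Relation.ReflTransGen Rw i (ns i) ∧ ∀ j, ¬ Rw (ns i) j)
    (i0 : Interaction L M) :
    (nfaS ns i0).accepts = {t | Sem i0 t} := by
  ext t
  exact mem_nfaS_acceptsFrom_iff_sem (fun i => (hns i).1) .refl t

/-- for any normalization function `ns` sending each interaction to an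
`R`-normal form reachable from it by rewriting (such a function exists and is unique
since `→_R` is convergent), the language recognized by the simplified automaton
`nfa_s(i0)` equals the trace semantics `σ(i0)`. -/
theorem nfaS_accepts_eq_sem {L M : Type} [Finite L] [Finite M]
    (ns : Interaction L M → Interaction L M)
    (hns : ∀ i, Relation.ReflTransGen Rw i (ns i) ∧ ∀ j, ¬ Rw (ns i) j)
    (i0 : Interaction L M) :
    (nfaS ns i0).accepts = {t | Sem i0 t} :=
  nfaS_accepts_eq_sem_general ns hns i0
end

section
/- The term-rewriting system →_R on interactions is convergent (terminating and confluent), so every interaction i ∈ I has a unique irreducible R-normal form i_s; moreover this normal form is semantically sound: σ(i) = σ(i_s). -/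
namespace Interaction

variable {L M : Type}

section Aux
variable {L M : Type}

/-- size measure -/
def sz : Interaction L M → Nat
  | .empty => 1
  | .act _ => 1
  | .loopS i => sz i + 1
  | .strict i1 i2 => sz i1 + sz i2 + 1
  | .alt i1 i2 => sz i1 + sz i2 + 1
  | .cr _ i1 i2 => sz i1 + sz i2 + 1

theorem sz_pos (i : Interaction L M) : 0 < sz i := by
  cases i <;> simp [sz]

theorem rw_sz_lt {i j : Interaction L M} (h : Rw i j) : sz j < sz i := by
  induction h <;> simp [sz] <;> omega

def isEmpty : Interaction L M → Bool
  | .empty => true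
  | _ => false

def isLoop : Interaction L M → Bool
  | .loopS _ => true
  | _ => false

theorem isEmpty_iff {i : Interaction L M} : isEmpty i = true ↔ i = .empty := by
  cases i <;> simp [isEmpty]

theorem isLoop_iff {i : Interaction L M} : isLoop i = true ↔ ∃ x, i = .loopS x := by
  cases i <;> simp [isLoop]

def mkStrict (i1 i2 : Interaction L M) : Interaction L M :=
  if isEmpty i1 then i2 else if isEmpty i2 then i1 else .strict i1 i2

def mkCr (ℓ : Set L) (i1 i2 : Interaction L M) : Interaction L M :=
  if isEmpty i1 then i2 else if isEmpty i2 then i1 else .cr ℓ i1 i2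

def mkLoop (i : Interaction L M) : Interaction L M :=
  if isEmpty i then .empty else .loopS i

def mkAlt (i1 i2 : Interaction L M) : Interaction L M :=
  if isEmpty i1 then (if isEmpty i2 then .empty else if isLoop i2 then i2 else .alt i1 i2)
  else if isEmpty i2 then (if isLoop i1 then i1 else .alt i1 i2)
  else .alt i1 i2

def norm : Interaction L M → Interaction L M
  | .empty => .empty
  | .act a => .act a
  | .loopS i => mkLoop (norm i)
  | .strict i1 i2 => mkStrict (norm i1) (norm i2)
  | .alt i1 i2 => mkAlt (norm i1) (norm i2)
  | .cr ℓ i1 i2 => mkCr ℓ (norm i1) (norm i2)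

/-- no rewrite from empty or act -/
theorem not_rw_empty {k : Interaction L M} : ¬ Rw .empty k := by
  intro h; cases h

theorem not_rw_act {a : MyAction L M} {k : Interaction L M} : ¬ Rw (.act a) k := by
  intro h; cases h

def Irred (i : Interaction L M) : Prop := ∀ k, ¬ Rw i k

theorem irred_empty : Irred (Interaction.empty (L := L) (M := M)) := fun _ => not_rw_empty
theorem irred_act (a : MyAction L M) : Irred (Interaction.act (L := L) (M := M) a) :=
  fun _ => not_rw_act

theorem irred_mkStrict {i1 i2 : Interaction L M} (h1 : Irred i1) (h2 : Irred i2) :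
    Irred (mkStrict i1 i2) := by
  unfold mkStrict
  by_cases e1 : isEmpty i1
  · simpa [e1]
  · by_cases e2 : isEmpty i2
    · simpa [e1, e2]
    · simp only [e1, e2, if_false, Bool.false_eq_true]
      intro k hk
      cases hk with
      | strictEmptyL => simp [isEmpty] at e1
      | strictEmptyR => simp [isEmpty] at e2
      | strictCongrL h => exact h1 _ h
      | strictCongrR h => exact h2 _ h

theorem irred_mkCr {ℓ : Set L} {i1 i2 : Interaction L M} (h1 : Irred i1) (h2 : Irred i2) :
    Irred (mkCr ℓ i1 i2) := by
  unfold mkCr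
  by_cases e1 : isEmpty i1
  · simpa [e1]
  · by_cases e2 : isEmpty i2
    · simpa [e1, e2]
    · simp only [e1, e2, if_false, Bool.false_eq_true]
      intro k hk
      cases hk with
      | crEmptyL => simp [isEmpty] at e1
      | crEmptyR => simp [isEmpty] at e2
      | crCongrL h => exact h1 _ h
      | crCongrR h => exact h2 _ h

theorem irred_mkLoop {i : Interaction L M} (h : Irred i) : Irred (mkLoop i) := by
  unfold mkLoop
  by_cases e : isEmpty i
  · simp only [e, if_true]; exact irred_empty
  · simp only [e, if_false, Bool.false_eq_true]
    intro k hk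
    cases hk with
    | loopEmpty => simp [isEmpty] at e
    | loopCongr h' => exact h _ h'

theorem irred_mkAlt {i1 i2 : Interaction L M} (h1 : Irred i1) (h2 : Irred i2) :
    Irred (mkAlt i1 i2) := by
  unfold mkAlt
  by_cases e1 : isEmpty i1
  · by_cases e2 : isEmpty i2
    · simp only [e1, e2, if_true]; exact irred_empty
    · by_cases l2 : isLoop i2
      · simpa [e1, e2, l2]
      · simp only [e1, e2, l2, if_true, if_false, Bool.false_eq_true]
        intro k hk
        rw [isEmpty_iff] at e1; subst e1
        cases hk with
        | altEmptyLoop => simp [isLoop] at l2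
        | altEmptyEmpty => simp [isEmpty] at e2
        | altCongrL h => exact not_rw_empty h
        | altCongrR h => exact h2 _ h
  · by_cases e2 : isEmpty i2
    · by_cases l1 : isLoop i1
      · simpa [e1, e2, l1]
      · simp only [e1, e2, l1, if_true, if_false, Bool.false_eq_true]
        intro k hk
        rw [isEmpty_iff] at e2; subst e2
        cases hk with
        | altLoopEmpty => simp [isLoop] at l1
        | altEmptyEmpty => simp [isEmpty] at e1
        | altCongrL h => exact h1 _ h
        | altCongrR h => exact not_rw_empty h
    · simp only [e1, e2, if_false, Bool.false_eq_true]
      intro k hk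
      cases hk with
      | altEmptyLoop => simp [isEmpty] at e1
      | altLoopEmpty => simp [isEmpty] at e2
      | altEmptyEmpty => simp [isEmpty] at e1
      | altCongrL h => exact h1 _ h
      | altCongrR h => exact h2 _ h

theorem irred_norm (i : Interaction L M) : Irred (norm i) := by
  induction i with
  | empty => exact irred_empty
  | act a => exact irred_act a
  | loopS i ih => exact irred_mkLoop ih
  | strict i1 i2 ih1 ih2 => exact irred_mkStrict ih1 ih2
  | alt i1 i2 ih1 ih2 => exact irred_mkAlt ih1 ih2
  | cr ℓ i1 i2 ih1 ih2 => exact irred_mkCr ih1 ih2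

end Aux
section Aux2
variable {L M : Type}

open Relation

abbrev RwS : Interaction L M → Interaction L M → Prop := Relation.ReflTransGen Rw

@[simp] theorem isEmpty_empty : isEmpty (Interaction.empty (L := L) (M := M)) = true := rfl
@[simp] theorem isEmpty_act (a : MyAction L M) : isEmpty (Interaction.act a) = false := rfl
@[simp] theorem isEmpty_loopS (i : Interaction L M) : isEmpty (Interaction.loopS i) = false := rfl
@[simp] theorem isEmpty_strict (i1 i2 : Interaction L M) :
    isEmpty (Interaction.strict i1 i2) = false := rfl
@[simp] theorem isEmpty_alt (i1 i2 : Interaction L M) :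
    isEmpty (Interaction.alt i1 i2) = false := rfl
@[simp] theorem isEmpty_cr (ℓ : Set L) (i1 i2 : Interaction L M) :
    isEmpty (Interaction.cr ℓ i1 i2) = false := rfl
@[simp] theorem isLoop_empty : isLoop (Interaction.empty (L := L) (M := M)) = false := rfl
@[simp] theorem isLoop_act (a : MyAction L M) : isLoop (Interaction.act a) = false := rfl
@[simp] theorem isLoop_loopS (i : Interaction L M) : isLoop (Interaction.loopS i) = true := rfl
@[simp] theorem isLoop_strict (i1 i2 : Interaction L M) :
    isLoop (Interaction.strict i1 i2) = false := rfl
@[simp] theorem isLoop_alt (i1 i2 : Interaction L M) :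
    isLoop (Interaction.alt i1 i2) = false := rfl
@[simp] theorem isLoop_cr (ℓ : Set L) (i1 i2 : Interaction L M) :
    isLoop (Interaction.cr ℓ i1 i2) = false := rfl

theorem mkStrict_emptyL (i : Interaction L M) : mkStrict .empty i = i := by simp [mkStrict]
theorem mkStrict_emptyR (i : Interaction L M) : mkStrict i .empty = i := by
  cases i <;> simp [mkStrict]
theorem mkCr_emptyL (ℓ : Set L) (i : Interaction L M) : mkCr ℓ .empty i = i := by simp [mkCr]
theorem mkCr_emptyR (ℓ : Set L) (i : Interaction L M) : mkCr ℓ i .empty = i := by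
  cases i <;> simp [mkCr]
theorem mkLoop_empty : mkLoop (Interaction.empty (L := L) (M := M)) = .empty := by simp [mkLoop]
theorem mkAlt_empty_empty : mkAlt (Interaction.empty (L := L) (M := M)) .empty = .empty := by
  simp [mkAlt]
theorem mkAlt_empty_loop (x : Interaction L M) : mkAlt .empty (.loopS x) = .loopS x := by
  simp [mkAlt]
theorem mkAlt_loop_empty (x : Interaction L M) : mkAlt (.loopS x) .empty = .loopS x := by
  simp [mkAlt]

theorem mkLoop_cases (i : Interaction L M) :
    mkLoop i = .empty ∨ ∃ y, mkLoop i = .loopS y := by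
  cases i <;> simp [mkLoop]

theorem rws_loop {i j : Interaction L M} (h : RwS i j) : RwS (.loopS i) (.loopS j) := by
  induction h with
  | refl => exact .refl
  | tail _ h2 ih => exact ih.tail (.loopCongr h2)

theorem rws_strictL {i1 j1 i2 : Interaction L M} (h : RwS i1 j1) :
    RwS (.strict i1 i2) (.strict j1 i2) := by
  induction h with
  | refl => exact .refl
  | tail _ h2 ih => exact ih.tail (.strictCongrL h2)

theorem rws_strictR {i1 i2 j2 : Interaction L M} (h : RwS i2 j2) :
    RwS (.strict i1 i2) (.strict i1 j2) := by
  induction h with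
  | refl => exact .refl
  | tail _ h2 ih => exact ih.tail (.strictCongrR h2)

theorem rws_strict {i1 j1 i2 j2 : Interaction L M} (h1 : RwS i1 j1) (h2 : RwS i2 j2) :
    RwS (.strict i1 i2) (.strict j1 j2) := (rws_strictL h1).trans (rws_strictR h2)

theorem rws_altL {i1 j1 i2 : Interaction L M} (h : RwS i1 j1) :
    RwS (.alt i1 i2) (.alt j1 i2) := by
  induction h with
  | refl => exact .refl
  | tail _ h2 ih => exact ih.tail (.altCongrL h2)

theorem rws_altR {i1 i2 j2 : Interaction L M} (h : RwS i2 j2) :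
    RwS (.alt i1 i2) (.alt i1 j2) := by
  induction h with
  | refl => exact .refl
  | tail _ h2 ih => exact ih.tail (.altCongrR h2)

theorem rws_alt {i1 j1 i2 j2 : Interaction L M} (h1 : RwS i1 j1) (h2 : RwS i2 j2) :
    RwS (.alt i1 i2) (.alt j1 j2) := (rws_altL h1).trans (rws_altR h2)

theorem rws_crL {ℓ : Set L} {i1 j1 i2 : Interaction L M} (h : RwS i1 j1) :
    RwS (.cr ℓ i1 i2) (.cr ℓ j1 i2) := by
  induction h with
  | refl => exact .refl
  | tail _ h2 ih => exact ih.tail (.crCongrL h2)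

theorem rws_crR {ℓ : Set L} {i1 i2 j2 : Interaction L M} (h : RwS i2 j2) :
    RwS (.cr ℓ i1 i2) (.cr ℓ i1 j2) := by
  induction h with
  | refl => exact .refl
  | tail _ h2 ih => exact ih.tail (.crCongrR h2)

theorem rws_cr {ℓ : Set L} {i1 j1 i2 j2 : Interaction L M} (h1 : RwS i1 j1) (h2 : RwS i2 j2) :
    RwS (.cr ℓ i1 i2) (.cr ℓ j1 j2) := (rws_crL h1).trans (rws_crR h2)

theorem rws_mkStrict (i1 i2 : Interaction L M) : RwS (.strict i1 i2) (mkStrict i1 i2) := by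
  by_cases e1 : isEmpty i1
  · rw [isEmpty_iff] at e1; subst e1
    rw [mkStrict_emptyL]; exact ReflTransGen.single (Rw.strictEmptyL i2)
  · by_cases e2 : isEmpty i2
    · rw [isEmpty_iff] at e2; subst e2
      rw [mkStrict_emptyR]; exact ReflTransGen.single (Rw.strictEmptyR i1)
    · unfold mkStrict; simp only [e1, e2, if_false, Bool.false_eq_true]; exact .refl

theorem rws_mkCr (ℓ : Set L) (i1 i2 : Interaction L M) : RwS (.cr ℓ i1 i2) (mkCr ℓ i1 i2) := by
  by_cases e1 : isEmpty i1
  · rw [isEmpty_iff] at e1; subst e1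
    rw [mkCr_emptyL]; exact ReflTransGen.single (Rw.crEmptyL ℓ i2)
  · by_cases e2 : isEmpty i2
    · rw [isEmpty_iff] at e2; subst e2
      rw [mkCr_emptyR]; exact ReflTransGen.single (Rw.crEmptyR ℓ i1)
    · unfold mkCr; simp only [e1, e2, if_false, Bool.false_eq_true]; exact .refl

theorem rws_mkLoop (i : Interaction L M) : RwS (.loopS i) (mkLoop i) := by
  by_cases e : isEmpty i
  · rw [isEmpty_iff] at e; subst e
    rw [mkLoop_empty]; exact ReflTransGen.single Rw.loopEmpty
  · unfold mkLoop; simp only [e, if_false, Bool.false_eq_true]; exact .refl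

theorem rws_mkAlt (i1 i2 : Interaction L M) : RwS (.alt i1 i2) (mkAlt i1 i2) := by
  by_cases e1 : isEmpty i1
  · rw [isEmpty_iff] at e1; subst e1
    by_cases e2 : isEmpty i2
    · rw [isEmpty_iff] at e2; subst e2
      rw [mkAlt_empty_empty]; exact ReflTransGen.single Rw.altEmptyEmpty
    · by_cases l2 : isLoop i2
      · rw [isLoop_iff] at l2; obtain ⟨x, rfl⟩ := l2
        rw [mkAlt_empty_loop]; exact ReflTransGen.single (Rw.altEmptyLoop x)
      · unfold mkAlt
        simp only [isEmpty_empty, e2, l2, if_true, if_false, Bool.false_eq_true]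
        exact .refl
  · by_cases e2 : isEmpty i2
    · rw [isEmpty_iff] at e2; subst e2
      by_cases l1 : isLoop i1
      · rw [isLoop_iff] at l1; obtain ⟨x, rfl⟩ := l1
        rw [mkAlt_loop_empty]; exact ReflTransGen.single (Rw.altLoopEmpty x)
      · unfold mkAlt
        simp only [isEmpty_empty, e1, l1, if_true, if_false, Bool.false_eq_true]
        exact .refl
    · unfold mkAlt; simp only [e1, e2, if_false, Bool.false_eq_true]; exact .refl

theorem rws_to_norm (i : Interaction L M) : RwS i (norm i) := by
  induction i with
  | empty => exact .refl
  | act a => exact .refl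
  | loopS i ih => exact (rws_loop ih).trans (rws_mkLoop _)
  | strict i1 i2 ih1 ih2 => exact (rws_strict ih1 ih2).trans (rws_mkStrict _ _)
  | alt i1 i2 ih1 ih2 => exact (rws_alt ih1 ih2).trans (rws_mkAlt _ _)
  | cr ℓ i1 i2 ih1 ih2 => exact (rws_cr ih1 ih2).trans (rws_mkCr ℓ _ _)

theorem norm_rw_eq {i j : Interaction L M} (h : Rw i j) : norm i = norm j := by
  induction h with
  | strictEmptyL x => simp [norm, mkStrict_emptyL]
  | strictEmptyR x => simp [norm, mkStrict_emptyR]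
  | crEmptyL ℓ x => simp [norm, mkCr_emptyL]
  | crEmptyR ℓ x => simp [norm, mkCr_emptyR]
  | altEmptyLoop x =>
      show mkAlt .empty (mkLoop (norm x)) = mkLoop (norm x)
      rcases mkLoop_cases (norm x) with h | ⟨y, h⟩ <;> rw [h]
      · exact mkAlt_empty_empty
      · exact mkAlt_empty_loop y
  | altLoopEmpty x =>
      show mkAlt (mkLoop (norm x)) .empty = mkLoop (norm x)
      rcases mkLoop_cases (norm x) with h | ⟨y, h⟩ <;> rw [h]
      · exact mkAlt_empty_empty
      · exact mkAlt_loop_empty y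
  | altEmptyEmpty => simp [norm, mkAlt_empty_empty]
  | loopEmpty => simp [norm, mkLoop_empty]
  | loopCongr _ ih => simp [norm, ih]
  | strictCongrL _ ih => simp [norm, ih]
  | strictCongrR _ ih => simp [norm, ih]
  | altCongrL _ ih => simp [norm, ih]
  | altCongrR _ ih => simp [norm, ih]
  | crCongrL _ ih => simp [norm, ih]
  | crCongrR _ ih => simp [norm, ih]

theorem norm_rws_eq {i j : Interaction L M} (h : RwS i j) : norm i = norm j := by
  induction h with
  | refl => rfl
  | tail _ h2 ih => exact ih.trans (norm_rw_eq h2)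

theorem irred_rws_eq {j k : Interaction L M} (h : RwS j k) (hj : Irred j) : k = j := by
  cases h.cases_head with
  | inl e => exact e.symm
  | inr e => obtain ⟨c, hc, _⟩ := e; exact absurd hc (hj c)

theorem norm_eq_of_irred {j : Interaction L M} (hj : Irred j) : norm j = j :=
  irred_rws_eq (rws_to_norm j) hj

end Aux2
section Aux3
variable {L M : Type}

open Relation

theorem evades_rw_iff {i j : Interaction L M} (h : Rw i j) (ℓ : Set L) :
    Evades i ℓ ↔ Evades j ℓ := by
  induction h with
  | strictEmptyL x =>
      exact ⟨fun h => by cases h with | strict h1 h2 => exact h2,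
        fun h => .strict (.empty ℓ) h⟩
  | strictEmptyR x =>
      exact ⟨fun h => by cases h with | strict h1 h2 => exact h1,
        fun h => .strict h (.empty ℓ)⟩
  | crEmptyL ℓ' x =>
      exact ⟨fun h => by cases h with | cr h1 h2 => exact h2,
        fun h => .cr (.empty ℓ) h⟩
  | crEmptyR ℓ' x =>
      exact ⟨fun h => by cases h with | cr h1 h2 => exact h1,
        fun h => .cr h (.empty ℓ)⟩
  | altEmptyLoop x => exact ⟨fun _ => .loopS x ℓ, fun _ => .altL (.empty ℓ)⟩
  | altLoopEmpty x => exact ⟨fun _ => .loopS x ℓ, fun _ => .altR (.empty ℓ)⟩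
  | altEmptyEmpty => exact ⟨fun _ => .empty ℓ, fun _ => .altL (.empty ℓ)⟩
  | loopEmpty => exact ⟨fun _ => .empty ℓ, fun _ => .loopS _ ℓ⟩
  | loopCongr h ih => exact ⟨fun _ => .loopS _ ℓ, fun _ => .loopS _ ℓ⟩
  | strictCongrL h ih =>
      constructor
      · intro h'; cases h' with | strict h1 h2 => exact .strict (ih.mp h1) h2
      · intro h'; cases h' with | strict h1 h2 => exact .strict (ih.mpr h1) h2
  | strictCongrR h ih =>
      constructor
      · intro h'; cases h' with | strict h1 h2 => exact .strict h1 (ih.mp h2)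
      · intro h'; cases h' with | strict h1 h2 => exact .strict h1 (ih.mpr h2)
  | altCongrL h ih =>
      constructor
      · intro h'
        cases h' with
        | altL h1 => exact .altL (ih.mp h1)
        | altR h2 => exact .altR h2
      · intro h'
        cases h' with
        | altL h1 => exact .altL (ih.mpr h1)
        | altR h2 => exact .altR h2
  | altCongrR h ih =>
      constructor
      · intro h'
        cases h' with
        | altL h1 => exact .altL h1
        | altR h2 => exact .altR (ih.mp h2)
      · intro h'
        cases h' with
        | altL h1 => exact .altL h1
        | altR h2 => exact .altR (ih.mpr h2)
  | crCongrL h ih =>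
      constructor
      · intro h'; cases h' with | cr h1 h2 => exact .cr (ih.mp h1) h2
      · intro h'; cases h' with | cr h1 h2 => exact .cr (ih.mpr h1) h2
  | crCongrR h ih =>
      constructor
      · intro h'; cases h' with | cr h1 h2 => exact .cr h1 (ih.mp h2)
      · intro h'; cases h' with | cr h1 h2 => exact .cr h1 (ih.mpr h2)

theorem noExpr_rw_iff {i j : Interaction L M} (h : Rw i j) (a : MyAction L M) :
    NoExpr i a ↔ NoExpr j a := by
  induction h with
  | strictEmptyL x =>
      constructor
      · intro h
        cases h with
        | strictNoEvade h1 e => exact absurd (.empty _) e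
        | strictBoth h1 h2 => exact h2
      · intro h; exact .strictBoth (.empty a) h
  | strictEmptyR x =>
      constructor
      · intro h
        cases h with
        | strictNoEvade h1 e => exact h1
        | strictBoth h1 h2 => exact h1
      · intro h; exact .strictBoth h (.empty a)
  | crEmptyL ℓ x =>
      constructor
      · intro h
        cases h with
        | crNoEvade h1 e => exact absurd (.empty _) e
        | crBoth h1 h2 => exact h2
      · intro h; exact .crBoth (.empty a) h
  | crEmptyR ℓ x =>
      constructor
      · intro h
        cases h with
        | crNoEvade h1 e => exact h1
        | crBoth h1 h2 => exact h1
      · intro h; exact .crBoth h (.empty a)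
  | altEmptyLoop x =>
      constructor
      · intro h; cases h with | alt h1 h2 => exact h2
      · intro h; exact .alt (.empty a) h
  | altLoopEmpty x =>
      constructor
      · intro h; cases h with | alt h1 h2 => exact h1
      · intro h; exact .alt h (.empty a)
  | altEmptyEmpty => exact ⟨fun _ => .empty a, fun _ => .alt (.empty a) (.empty a)⟩
  | loopEmpty => exact ⟨fun _ => .empty a, fun _ => .loopS (.empty a)⟩
  | loopCongr h ih =>
      constructor
      · intro h'; cases h' with | loopS h1 => exact .loopS (ih.mp h1)
      · intro h'; cases h' with | loopS h1 => exact .loopS (ih.mpr h1)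
  | @strictCongrL i1 i1' i2 h ih =>
      constructor
      · intro h'
        cases h' with
        | strictNoEvade h1 e =>
            exact .strictNoEvade (ih.mp h1) (fun e' => e ((evades_rw_iff h _).mpr e'))
        | strictBoth h1 h2 => exact .strictBoth (ih.mp h1) h2
      · intro h'
        cases h' with
        | strictNoEvade h1 e =>
            exact .strictNoEvade (ih.mpr h1) (fun e' => e ((evades_rw_iff h _).mp e'))
        | strictBoth h1 h2 => exact .strictBoth (ih.mpr h1) h2
  | strictCongrR h ih =>
      constructor
      · intro h'
        cases h' with
        | strictNoEvade h1 e => exact .strictNoEvade h1 e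
        | strictBoth h1 h2 => exact .strictBoth h1 (ih.mp h2)
      · intro h'
        cases h' with
        | strictNoEvade h1 e => exact .strictNoEvade h1 e
        | strictBoth h1 h2 => exact .strictBoth h1 (ih.mpr h2)
  | altCongrL h ih =>
      constructor
      · intro h'; cases h' with | alt h1 h2 => exact .alt (ih.mp h1) h2
      · intro h'; cases h' with | alt h1 h2 => exact .alt (ih.mpr h1) h2
  | altCongrR h ih =>
      constructor
      · intro h'; cases h' with | alt h1 h2 => exact .alt h1 (ih.mp h2)
      · intro h'; cases h' with | alt h1 h2 => exact .alt h1 (ih.mpr h2)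
  | @crCongrL i1 i1' i2 ℓ h ih =>
      constructor
      · intro h'
        cases h' with
        | crNoEvade h1 e =>
            exact .crNoEvade (ih.mp h1) (fun e' => e ((evades_rw_iff h _).mpr e'))
        | crBoth h1 h2 => exact .crBoth (ih.mp h1) h2
      · intro h'
        cases h' with
        | crNoEvade h1 e =>
            exact .crNoEvade (ih.mpr h1) (fun e' => e ((evades_rw_iff h _).mp e'))
        | crBoth h1 h2 => exact .crBoth (ih.mpr h1) h2
  | crCongrR h ih =>
      constructor
      · intro h'
        cases h' with
        | crNoEvade h1 e => exact .crNoEvade h1 e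
        | crBoth h1 h2 => exact .crBoth h1 (ih.mp h2)
      · intro h'
        cases h' with
        | crNoEvade h1 e => exact .crNoEvade h1 e
        | crBoth h1 h2 => exact .crBoth h1 (ih.mpr h2)

theorem prune_empty_inv {ℓ : Set L} {p : Interaction L M} (h : Prune .empty ℓ p) :
    p = .empty := by cases h; rfl

theorem not_exec_empty {a : MyAction L M} {k : Interaction L M} :
    ¬ Exec .empty a k := fun h => by cases h

end Aux3
section Aux4
variable {L M : Type}

open Relation

theorem prune_fwd {i j : Interaction L M} (h : Rw i j) :
    ∀ {ℓ p}, Prune i ℓ p → ∃ q, Prune j ℓ q ∧ RwS p q := by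
  induction h with
  | strictEmptyL x =>
      intro ℓ p hp
      cases hp with
      | strict h1 h2 =>
          rw [prune_empty_inv h1]
          exact ⟨_, h2, ReflTransGen.single (Rw.strictEmptyL _)⟩
  | strictEmptyR x =>
      intro ℓ p hp
      cases hp with
      | strict h1 h2 =>
          rw [prune_empty_inv h2]
          exact ⟨_, h1, ReflTransGen.single (Rw.strictEmptyR _)⟩
  | crEmptyL ℓ' x =>
      intro ℓ p hp
      cases hp with
      | cr h1 h2 =>
          rw [prune_empty_inv h1]
          exact ⟨_, h2, ReflTransGen.single (Rw.crEmptyL _ _)⟩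
  | crEmptyR ℓ' x =>
      intro ℓ p hp
      cases hp with
      | cr h1 h2 =>
          rw [prune_empty_inv h2]
          exact ⟨_, h1, ReflTransGen.single (Rw.crEmptyR _ _)⟩
  | altEmptyLoop x =>
      intro ℓ p hp
      cases hp with
      | altL h1 e => exact absurd (.loopS x ℓ) e
      | altR h2 e => exact absurd (.empty ℓ) e
      | altBoth h1 h2 =>
          rw [prune_empty_inv h1]
          refine ⟨_, h2, ?_⟩
          cases h2 with
          | loopS h => exact ReflTransGen.single (Rw.altEmptyLoop _)
          | loopSElim h => exact ReflTransGen.single Rw.altEmptyEmpty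
  | altLoopEmpty x =>
      intro ℓ p hp
      cases hp with
      | altL h1 e => exact absurd (.empty ℓ) e
      | altR h2 e => exact absurd (.loopS x ℓ) e
      | altBoth h1 h2 =>
          rw [prune_empty_inv h2]
          refine ⟨_, h1, ?_⟩
          cases h1 with
          | loopS h => exact ReflTransGen.single (Rw.altLoopEmpty _)
          | loopSElim h => exact ReflTransGen.single Rw.altEmptyEmpty
  | altEmptyEmpty =>
      intro ℓ p hp
      cases hp with
      | altL h1 e => exact absurd (.empty ℓ) e
      | altR h2 e => exact absurd (.empty ℓ) e
      | altBoth h1 h2 =>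
          rw [prune_empty_inv h1, prune_empty_inv h2]
          exact ⟨_, .empty ℓ, ReflTransGen.single Rw.altEmptyEmpty⟩
  | loopEmpty =>
      intro ℓ p hp
      cases hp with
      | loopS h => rw [prune_empty_inv h]
                   exact ⟨_, .empty ℓ, ReflTransGen.single Rw.loopEmpty⟩
      | loopSElim e => exact absurd (.empty ℓ) e
  | @loopCongr x x' h ih =>
      intro ℓ p hp
      cases hp with
      | loopS h1 =>
          obtain ⟨q, hq, hr⟩ := ih h1
          exact ⟨_, .loopS hq, rws_loop hr⟩
      | loopSElim e =>
          exact ⟨_, .loopSElim (fun e' => e ((evades_rw_iff h _).mpr e')), .refl⟩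
  | @strictCongrL i1 i1' i2 h ih =>
      intro ℓ p hp
      cases hp with
      | strict h1 h2 =>
          obtain ⟨q, hq, hr⟩ := ih h1
          exact ⟨_, .strict hq h2, rws_strictL hr⟩
  | strictCongrR h ih =>
      intro ℓ p hp
      cases hp with
      | strict h1 h2 =>
          obtain ⟨q, hq, hr⟩ := ih h2
          exact ⟨_, .strict h1 hq, rws_strictR hr⟩
  | @altCongrL i1 i1' i2 h ih =>
      intro ℓ p hp
      cases hp with
      | altL h1 e =>
          obtain ⟨q, hq, hr⟩ := ih h1
          exact ⟨_, .altL hq e, hr⟩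
      | altR h2 e =>
          exact ⟨_, .altR h2 (fun e' => e ((evades_rw_iff h _).mpr e')), .refl⟩
      | altBoth h1 h2 =>
          obtain ⟨q, hq, hr⟩ := ih h1
          exact ⟨_, .altBoth hq h2, rws_altL hr⟩
  | @altCongrR i1 i2 i2' h ih =>
      intro ℓ p hp
      cases hp with
      | altL h1 e =>
          exact ⟨_, .altL h1 (fun e' => e ((evades_rw_iff h _).mpr e')), .refl⟩
      | altR h2 e =>
          obtain ⟨q, hq, hr⟩ := ih h2
          exact ⟨_, .altR hq e, hr⟩
      | altBoth h1 h2 =>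
          obtain ⟨q, hq, hr⟩ := ih h2
          exact ⟨_, .altBoth h1 hq, rws_altR hr⟩
  | crCongrL h ih =>
      intro ℓ p hp
      cases hp with
      | cr h1 h2 =>
          obtain ⟨q, hq, hr⟩ := ih h1
          exact ⟨_, .cr hq h2, rws_crL hr⟩
  | crCongrR h ih =>
      intro ℓ p hp
      cases hp with
      | cr h1 h2 =>
          obtain ⟨q, hq, hr⟩ := ih h2
          exact ⟨_, .cr h1 hq, rws_crR hr⟩

theorem prune_bwd {i j : Interaction L M} (h : Rw i j) :
    ∀ {ℓ q}, Prune j ℓ q → ∃ p, Prune i ℓ p ∧ RwS p q := by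
  induction h with
  | strictEmptyL x =>
      intro ℓ q hq
      exact ⟨_, .strict (.empty ℓ) hq, ReflTransGen.single (Rw.strictEmptyL _)⟩
  | strictEmptyR x =>
      intro ℓ q hq
      exact ⟨_, .strict hq (.empty ℓ), ReflTransGen.single (Rw.strictEmptyR _)⟩
  | crEmptyL ℓ' x =>
      intro ℓ q hq
      exact ⟨_, .cr (.empty ℓ) hq, ReflTransGen.single (Rw.crEmptyL _ _)⟩
  | crEmptyR ℓ' x =>
      intro ℓ q hq
      exact ⟨_, .cr hq (.empty ℓ), ReflTransGen.single (Rw.crEmptyR _ _)⟩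
  | altEmptyLoop x =>
      intro ℓ q hq
      refine ⟨_, .altBoth (.empty ℓ) hq, ?_⟩
      cases hq with
      | loopS h => exact ReflTransGen.single (Rw.altEmptyLoop _)
      | loopSElim h => exact ReflTransGen.single Rw.altEmptyEmpty
  | altLoopEmpty x =>
      intro ℓ q hq
      refine ⟨_, .altBoth hq (.empty ℓ), ?_⟩
      cases hq with
      | loopS h => exact ReflTransGen.single (Rw.altLoopEmpty _)
      | loopSElim h => exact ReflTransGen.single Rw.altEmptyEmpty
  | altEmptyEmpty =>
      intro ℓ q hq
      rw [prune_empty_inv hq]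
      exact ⟨_, .altBoth (.empty ℓ) (.empty ℓ), ReflTransGen.single Rw.altEmptyEmpty⟩
  | loopEmpty =>
      intro ℓ q hq
      rw [prune_empty_inv hq]
      exact ⟨_, .loopS (.empty ℓ), ReflTransGen.single Rw.loopEmpty⟩
  | @loopCongr x x' h ih =>
      intro ℓ q hq
      cases hq with
      | loopS h1 =>
          obtain ⟨p, hp, hr⟩ := ih h1
          exact ⟨_, .loopS hp, rws_loop hr⟩
      | loopSElim e =>
          exact ⟨_, .loopSElim (fun e' => e ((evades_rw_iff h _).mp e')), .refl⟩
  | strictCongrL h ih =>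
      intro ℓ q hq
      cases hq with
      | strict h1 h2 =>
          obtain ⟨p, hp, hr⟩ := ih h1
          exact ⟨_, .strict hp h2, rws_strictL hr⟩
  | strictCongrR h ih =>
      intro ℓ q hq
      cases hq with
      | strict h1 h2 =>
          obtain ⟨p, hp, hr⟩ := ih h2
          exact ⟨_, .strict h1 hp, rws_strictR hr⟩
  | @altCongrL i1 i1' i2 h ih =>
      intro ℓ q hq
      cases hq with
      | altL h1 e =>
          obtain ⟨p, hp, hr⟩ := ih h1
          exact ⟨_, .altL hp e, hr⟩
      | altR h2 e =>
          exact ⟨_, .altR h2 (fun e' => e ((evades_rw_iff h _).mp e')), .refl⟩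
      | altBoth h1 h2 =>
          obtain ⟨p, hp, hr⟩ := ih h1
          exact ⟨_, .altBoth hp h2, rws_altL hr⟩
  | @altCongrR i1 i2 i2' h ih =>
      intro ℓ q hq
      cases hq with
      | altL h1 e =>
          exact ⟨_, .altL h1 (fun e' => e ((evades_rw_iff h _).mp e')), .refl⟩
      | altR h2 e =>
          obtain ⟨p, hp, hr⟩ := ih h2
          exact ⟨_, .altR hp e, hr⟩
      | altBoth h1 h2 =>
          obtain ⟨p, hp, hr⟩ := ih h2
          exact ⟨_, .altBoth h1 hp, rws_altR hr⟩
  | crCongrL h ih =>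
      intro ℓ q hq
      cases hq with
      | cr h1 h2 =>
          obtain ⟨p, hp, hr⟩ := ih h1
          exact ⟨_, .cr hp h2, rws_crL hr⟩
  | crCongrR h ih =>
      intro ℓ q hq
      cases hq with
      | cr h1 h2 =>
          obtain ⟨p, hp, hr⟩ := ih h2
          exact ⟨_, .cr h1 hp, rws_crR hr⟩

end Aux4
section Aux5
variable {L M : Type}

open Relation

theorem exec_fwd {i j : Interaction L M} (h : Rw i j) :
    ∀ {a i'}, Exec i a i' → ∃ j', Exec j a j' ∧ RwS i' j' := by
  induction h with
  | strictEmptyL x =>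
      intro a i' he
      cases he with
      | strictL h1 => exact absurd h1 not_exec_empty
      | strictR h2 e => exact ⟨_, h2, .refl⟩
  | strictEmptyR x =>
      intro a i' he
      cases he with
      | strictL h1 => exact ⟨_, h1, ReflTransGen.single (Rw.strictEmptyR _)⟩
      | strictR h2 e => exact absurd h2 not_exec_empty
  | crEmptyL ℓ x =>
      intro a i' he
      cases he with
      | crL h1 => exact absurd h1 not_exec_empty
      | crR h2 hp =>
          rw [prune_empty_inv hp]
          exact ⟨_, h2, ReflTransGen.single (Rw.crEmptyL _ _)⟩
  | crEmptyR ℓ x =>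
      intro a i' he
      cases he with
      | crL h1 => exact ⟨_, h1, ReflTransGen.single (Rw.crEmptyR _ _)⟩
      | crR h2 hp => exact absurd h2 not_exec_empty
  | altEmptyLoop x =>
      intro a i' he
      cases he with
      | altChoiceL h1 _ => exact absurd h1 not_exec_empty
      | altChoiceR h2 _ => exact ⟨_, h2, .refl⟩
      | altDelay h1 h2 => exact absurd h1 not_exec_empty
  | altLoopEmpty x =>
      intro a i' he
      cases he with
      | altChoiceL h1 _ => exact ⟨_, h1, .refl⟩
      | altChoiceR h2 _ => exact absurd h2 not_exec_empty
      | altDelay h1 h2 => exact absurd h2 not_exec_empty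
  | altEmptyEmpty =>
      intro a i' he
      cases he with
      | altChoiceL h1 _ => exact absurd h1 not_exec_empty
      | altChoiceR h2 _ => exact absurd h2 not_exec_empty
      | altDelay h1 h2 => exact absurd h1 not_exec_empty
  | loopEmpty =>
      intro a i' he
      cases he with
      | loop h1 => exact absurd h1 not_exec_empty
  | @loopCongr x x' h ih =>
      intro a i' he
      cases he with
      | loop h1 =>
          obtain ⟨k', hk, hr⟩ := ih h1
          exact ⟨_, .loop hk, rws_strict hr (ReflTransGen.single (Rw.loopCongr h))⟩
  | @strictCongrL i1 i1' i2 h ih =>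
      intro a i' he
      cases he with
      | strictL h1 =>
          obtain ⟨k', hk, hr⟩ := ih h1
          exact ⟨_, .strictL hk, rws_strictL hr⟩
      | strictR h2 e =>
          exact ⟨_, .strictR h2 ((evades_rw_iff h _).mp e), .refl⟩
  | @strictCongrR i1 i2 i2' h ih =>
      intro a i' he
      cases he with
      | strictL h1 =>
          exact ⟨_, .strictL h1, ReflTransGen.single (Rw.strictCongrR h)⟩
      | strictR h2 e =>
          obtain ⟨k', hk, hr⟩ := ih h2
          exact ⟨_, .strictR hk e, hr⟩
  | @altCongrL i1 i1' i2 h ih =>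
      intro a i' he
      cases he with
      | altChoiceL h1 ne =>
          obtain ⟨k', hk, hr⟩ := ih h1
          exact ⟨_, .altChoiceL hk ne, hr⟩
      | altChoiceR h2 ne =>
          exact ⟨_, .altChoiceR h2 ((noExpr_rw_iff h _).mp ne), .refl⟩
      | altDelay h1 h2 =>
          obtain ⟨k', hk, hr⟩ := ih h1
          exact ⟨_, .altDelay hk h2, rws_altL hr⟩
  | @altCongrR i1 i2 i2' h ih =>
      intro a i' he
      cases he with
      | altChoiceL h1 ne =>
          exact ⟨_, .altChoiceL h1 ((noExpr_rw_iff h _).mp ne), .refl⟩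
      | altChoiceR h2 ne =>
          obtain ⟨k', hk, hr⟩ := ih h2
          exact ⟨_, .altChoiceR hk ne, hr⟩
      | altDelay h1 h2 =>
          obtain ⟨k', hk, hr⟩ := ih h2
          exact ⟨_, .altDelay h1 hk, rws_altR hr⟩
  | @crCongrL i1 i1' i2 ℓ h ih =>
      intro a i' he
      cases he with
      | crL h1 =>
          obtain ⟨k', hk, hr⟩ := ih h1
          exact ⟨_, .crL hk, rws_crL hr⟩
      | crR h2 hp =>
          obtain ⟨q, hq, hr⟩ := prune_fwd h hp
          exact ⟨_, .crR h2 hq, rws_crL hr⟩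
  | @crCongrR i1 i2 i2' ℓ h ih =>
      intro a i' he
      cases he with
      | crL h1 =>
          exact ⟨_, .crL h1, ReflTransGen.single (Rw.crCongrR h)⟩
      | crR h2 hp =>
          obtain ⟨k', hk, hr⟩ := ih h2
          exact ⟨_, .crR hk hp, rws_crR hr⟩

theorem exec_bwd {i j : Interaction L M} (h : Rw i j) :
    ∀ {a j'}, Exec j a j' → ∃ i', Exec i a i' ∧ RwS i' j' := by
  induction h with
  | strictEmptyL x =>
      intro a j' he
      exact ⟨_, .strictR he (.empty _), .refl⟩
  | strictEmptyR x =>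
      intro a j' he
      exact ⟨_, .strictL he, ReflTransGen.single (Rw.strictEmptyR _)⟩
  | crEmptyL ℓ x =>
      intro a j' he
      exact ⟨_, .crR he (.empty _), ReflTransGen.single (Rw.crEmptyL _ _)⟩
  | crEmptyR ℓ x =>
      intro a j' he
      exact ⟨_, .crL he, ReflTransGen.single (Rw.crEmptyR _ _)⟩
  | altEmptyLoop x =>
      intro a j' he
      exact ⟨_, .altChoiceR he (.empty a), .refl⟩
  | altLoopEmpty x =>
      intro a j' he
      exact ⟨_, .altChoiceL he (.empty a), .refl⟩
  | altEmptyEmpty =>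
      intro a j' he
      exact absurd he not_exec_empty
  | loopEmpty =>
      intro a j' he
      exact absurd he not_exec_empty
  | @loopCongr x x' h ih =>
      intro a j' he
      cases he with
      | loop h1 =>
          obtain ⟨k, hk, hr⟩ := ih h1
          exact ⟨_, .loop hk, rws_strict hr (ReflTransGen.single (Rw.loopCongr h))⟩
  | @strictCongrL i1 i1' i2 h ih =>
      intro a j' he
      cases he with
      | strictL h1 =>
          obtain ⟨k, hk, hr⟩ := ih h1
          exact ⟨_, .strictL hk, rws_strictL hr⟩
      | strictR h2 e =>
          exact ⟨_, .strictR h2 ((evades_rw_iff h _).mpr e), .refl⟩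
  | @strictCongrR i1 i2 i2' h ih =>
      intro a j' he
      cases he with
      | strictL h1 =>
          exact ⟨_, .strictL h1, ReflTransGen.single (Rw.strictCongrR h)⟩
      | strictR h2 e =>
          obtain ⟨k, hk, hr⟩ := ih h2
          exact ⟨_, .strictR hk e, hr⟩
  | @altCongrL i1 i1' i2 h ih =>
      intro a j' he
      cases he with
      | altChoiceL h1 ne =>
          obtain ⟨k, hk, hr⟩ := ih h1
          exact ⟨_, .altChoiceL hk ne, hr⟩
      | altChoiceR h2 ne =>
          exact ⟨_, .altChoiceR h2 ((noExpr_rw_iff h _).mpr ne), .refl⟩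
      | altDelay h1 h2 =>
          obtain ⟨k, hk, hr⟩ := ih h1
          exact ⟨_, .altDelay hk h2, rws_altL hr⟩
  | @altCongrR i1 i2 i2' h ih =>
      intro a j' he
      cases he with
      | altChoiceL h1 ne =>
          exact ⟨_, .altChoiceL h1 ((noExpr_rw_iff h _).mpr ne), .refl⟩
      | altChoiceR h2 ne =>
          obtain ⟨k, hk, hr⟩ := ih h2
          exact ⟨_, .altChoiceR hk ne, hr⟩
      | altDelay h1 h2 =>
          obtain ⟨k, hk, hr⟩ := ih h2
          exact ⟨_, .altDelay h1 hk, rws_altR hr⟩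
  | @crCongrL i1 i1' i2 ℓ h ih =>
      intro a j' he
      cases he with
      | crL h1 =>
          obtain ⟨k, hk, hr⟩ := ih h1
          exact ⟨_, .crL hk, rws_crL hr⟩
      | crR h2 hp =>
          obtain ⟨p, hp', hr⟩ := prune_bwd h hp
          exact ⟨_, .crR h2 hp', rws_crL hr⟩
  | @crCongrR i1 i2 i2' ℓ h ih =>
      intro a j' he
      cases he with
      | crL h1 =>
          exact ⟨_, .crL h1, ReflTransGen.single (Rw.crCongrR h)⟩
      | crR h2 hp =>
          obtain ⟨k, hk, hr⟩ := ih h2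
          exact ⟨_, .crR hk hp, rws_crR hr⟩

end Aux5
section Aux6
variable {L M : Type}

open Relation

theorem evades_rws_iff {i j : Interaction L M} (h : RwS i j) (ℓ : Set L) :
    Evades i ℓ ↔ Evades j ℓ := by
  induction h with
  | refl => exact Iff.rfl
  | tail _ h2 ih => exact ih.trans (evades_rw_iff h2 ℓ)

theorem exec_rws_fwd {i j : Interaction L M} (h : RwS i j) :
    ∀ {a i'}, Exec i a i' → ∃ j', Exec j a j' ∧ RwS i' j' := by
  induction h with
  | refl => exact fun he => ⟨_, he, .refl⟩
  | tail _ h2 ih =>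
      intro a i' he
      obtain ⟨k, hk, hr⟩ := ih he
      obtain ⟨j', hj, hr'⟩ := exec_fwd h2 hk
      exact ⟨j', hj, hr.trans hr'⟩

theorem exec_rws_bwd {i j : Interaction L M} (h : RwS i j) :
    ∀ {a j'}, Exec j a j' → ∃ i', Exec i a i' ∧ RwS i' j' := by
  induction h with
  | refl => exact fun he => ⟨_, he, .refl⟩
  | tail _ h2 ih =>
      intro a j' he
      obtain ⟨k, hk, hr⟩ := exec_bwd h2 he
      obtain ⟨i', hi, hr'⟩ := ih hk
      exact ⟨i', hi, hr'.trans hr⟩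

theorem sem_nil_inv {i : Interaction L M} (h : Sem i []) : Evades i Set.univ := by
  cases h with
  | nil h => exact h

theorem sem_rws_iff : ∀ (t : List (MyAction L M)) {i j : Interaction L M},
    RwS i j → (Sem i t ↔ Sem j t) := by
  intro t
  induction t with
  | nil =>
      intro i j h
      exact ⟨fun hs => .nil ((evades_rws_iff h _).mp (sem_nil_inv hs)),
        fun hs => .nil ((evades_rws_iff h _).mpr (sem_nil_inv hs))⟩
  | cons a t ih =>
      intro i j h
      constructor
      · intro hs
        cases hs with
        | cons he hs' =>
            obtain ⟨j', hj, hr⟩ := exec_rws_fwd h he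
            exact .cons hj ((ih hr).mp hs')
      · intro hs
        cases hs with
        | cons he hs' =>
            obtain ⟨i', hi, hr⟩ := exec_rws_bwd h he
            exact .cons hi ((ih hr).mpr hs')

end Aux6

end Interaction

open Interaction

/-- the rewriting system `→_R` is terminating (no infinite rewrite
sequence) and confluent; hence every interaction has a unique irreducible `R`-normal
form; moreover normalization is semantically sound: `σ(i) = σ(i_s)`. -/
theorem rw_convergent_unique_nf_sound {L M : Type} [Finite L] [Finite M] :
    (¬ ∃ f : ℕ → Interaction L M, ∀ n, Rw (f n) (f (n + 1))) ∧
    (∀ i i1 i2 : Interaction L M, Relation.ReflTransGen Rw i i1 →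
      Relation.ReflTransGen Rw i i2 →
      ∃ j, Relation.ReflTransGen Rw i1 j ∧ Relation.ReflTransGen Rw i2 j) ∧
    (∀ i : Interaction L M, ∃! j, Relation.ReflTransGen Rw i j ∧ ∀ k, ¬ Rw j k) ∧
    (∀ i j : Interaction L M, Relation.ReflTransGen Rw i j → (∀ k, ¬ Rw j k) →
      {t | Sem i t} = {t | Sem j t}) := by
  refine ⟨?_, ?_, ?_, ?_⟩
  · rintro ⟨f, hf⟩
    have hdec : ∀ n, sz (f (n + 1)) < sz (f n) := fun n => rw_sz_lt (hf n)
    have key : ∀ n, sz (f n) + n ≤ sz (f 0) := by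
      intro n
      induction n with
      | zero => omega
      | succ n ihn => have := hdec n; omega
    have := key (sz (f 0))
    have := sz_pos (f (sz (f 0)))
    omega
  · intro i i1 i2 h1 h2
    refine ⟨norm i, ?_, ?_⟩
    · rw [show norm i = norm i1 from norm_rws_eq h1]
      exact rws_to_norm i1
    · rw [show norm i = norm i2 from norm_rws_eq h2]
      exact rws_to_norm i2
  · intro i
    refine ⟨norm i, ⟨rws_to_norm i, irred_norm i⟩, ?_⟩
    rintro y ⟨hy1, hy2⟩
    calc y = norm y := (norm_eq_of_irred hy2).symm
    _ = norm i := (norm_rws_eq hy1).symm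
  · intro i j h _
    ext t
    exact sem_rws_iff t h
end

section
/- For every ℓ ⊆ L and every interaction i ∈ I: i ↓ ℓ holds if and only if there exists a unique interaction i' ∈ I such that i ⤳ℓ i'. -/
open Interaction

theorem prune_evades {L M : Type} {ℓ : Set L} {i i' : Interaction L M}
    (h : Prune i ℓ i') : Evades i ℓ := by
  induction h with
  | empty => exact .empty _
  | act a ℓ h => exact .act a ℓ h
  | altL _ _ ih => exact .altL ih
  | altR _ _ ih => exact .altR ih
  | altBoth _ _ ih1 ih2 => exact .altL ih1
  | strict _ _ ih1 ih2 => exact .strict ih1 ih2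
  | cr _ _ ih1 ih2 => exact .cr ih1 ih2
  | loopS _ _ => exact .loopS _ _
  | loopSElim _ => exact .loopS _ _

theorem evades_prune {L M : Type} {ℓ : Set L} {i : Interaction L M}
    (h : Evades i ℓ) : ∃ i', Prune i ℓ i' := by
  induction i with
  | empty => exact ⟨_, .empty ℓ⟩
  | act a =>
    cases h with
    | act _ _ ha => exact ⟨_, .act a ℓ ha⟩
  | loopS i1 ih =>
    by_cases h1 : Evades i1 ℓ
    · obtain ⟨i1', p1⟩ := ih h1
      exact ⟨_, .loopS p1⟩
    · exact ⟨_, .loopSElim h1⟩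
  | strict i1 i2 ih1 ih2 =>
    cases h with
    | strict h1 h2 =>
      obtain ⟨i1', p1⟩ := ih1 h1
      obtain ⟨i2', p2⟩ := ih2 h2
      exact ⟨_, .strict p1 p2⟩
  | alt i1 i2 ih1 ih2 =>
    by_cases h1 : Evades i1 ℓ <;> by_cases h2 : Evades i2 ℓ
    · obtain ⟨i1', p1⟩ := ih1 h1
      obtain ⟨i2', p2⟩ := ih2 h2
      exact ⟨_, .altBoth p1 p2⟩
    · obtain ⟨i1', p1⟩ := ih1 h1
      exact ⟨_, .altL p1 h2⟩
    · obtain ⟨i2', p2⟩ := ih2 h2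
      exact ⟨_, .altR p2 h1⟩
    · cases h with
      | altL h => exact absurd h h1
      | altR h => exact absurd h h2
  | cr ℓ' i1 i2 ih1 ih2 =>
    cases h with
    | cr h1 h2 =>
      obtain ⟨i1', p1⟩ := ih1 h1
      obtain ⟨i2', p2⟩ := ih2 h2
      exact ⟨_, .cr p1 p2⟩

theorem prune_unique {L M : Type} {ℓ : Set L} {i a b : Interaction L M}
    (ha : Prune i ℓ a) (hb : Prune i ℓ b) : a = b := by
  induction ha generalizing b with
  | empty => cases hb; rfl
  | act => cases hb; rfl
  | altL p1 hne ih =>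
    cases hb with
    | altL p1' _ => exact ih p1'
    | altR p2' _ => exact absurd (prune_evades p2') hne
    | altBoth _ p2' => exact absurd (prune_evades p2') hne
  | altR p2 hne ih =>
    cases hb with
    | altL p1' _ => exact absurd (prune_evades p1') hne
    | altR p2' _ => exact ih p2'
    | altBoth p1' _ => exact absurd (prune_evades p1') hne
  | altBoth p1 p2 ih1 ih2 =>
    cases hb with
    | altL _ hne => exact absurd (prune_evades p2) hne
    | altR _ hne => exact absurd (prune_evades p1) hne
    | altBoth p1' p2' => rw [ih1 p1', ih2 p2']
  | strict p1 p2 ih1 ih2 =>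
    cases hb with
    | strict p1' p2' => rw [ih1 p1', ih2 p2']
  | cr p1 p2 ih1 ih2 =>
    cases hb with
    | cr p1' p2' => rw [ih1 p1', ih2 p2']
  | loopS p1 ih =>
    cases hb with
    | loopS p1' => rw [ih p1']
    | loopSElim hne => exact absurd (prune_evades p1) hne
  | loopSElim hne =>
    cases hb with
    | loopS p1' => exact absurd (prune_evades p1') hne
    | loopSElim _ => rfl

/-- `i ↓ ℓ` holds iff there is a unique `i'` with `i ⤳ℓ i'`. -/
theorem evades_iff_existsUnique_prune {L M : Type} [Finite L] [Finite M]
    (ℓ : Set L) (i : Interaction L M) :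
    Evades i ℓ ↔ ∃! i', Prune i ℓ i' := by
  constructor
  · intro h
    obtain ⟨i', p⟩ := evades_prune h
    exact ⟨i', p, fun y hy => prune_unique hy p⟩
  · rintro ⟨i', p, -⟩
    exact prune_evades p
end
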